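/- arXiv:2602.00906 — 4 statements merged into one kernel-verified Lean document; each statement's English description precedes it below -/
import Mathlib

section
/- The map (p, μK, μN) ↦ F_p(μK, μN) is jointly lower semicontinuous on [0,1) × P([0,1]) × P([0,1]), where P([0,1]) carries the weak-* topology: for any sequence (p_j, μ_{K,j}, μ_{N,j}) → (p, μK, μN) with p_j, p ∈ [0,1), one has liminf_{j→∞} F_{p_j}(μ_{K,j}, μ_{N,j}) ≥ F_p(μK, μN). -/
open MeasureTheory Filter Topology

abbrev I01 : Set ℝ := Set.Icc 0 1

open Classical in
/-- Kullback–Leibler divergence with logarithm base 2, valued in `EReal`. -/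
noncomputable def klDiv2 {α : Type*} [MeasurableSpace α] (μ ν : Measure α) : EReal :=
  if μ ≪ ν ∧ Integrable (fun x => Real.logb 2 ((μ.rnDeriv ν x).toReal)) μ
  then ((∫ x, Real.logb 2 ((μ.rnDeriv ν x).toReal) ∂μ : ℝ) : EReal)
  else ⊤

noncomputable def mix {α : Type*} [MeasurableSpace α] (p : ℝ) (μ ν : Measure α) : Measure α :=
  (ENNReal.ofReal p) • μ + (ENNReal.ofReal (1 - p)) • ν

/-- `F_p(μK, μN)`, with `F_0(μK, μN) = KL(μK ‖ μN)`. -/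
noncomputable def Fp {α : Type*} [MeasurableSpace α] (p : ℝ) (μK μN : Measure α) : EReal :=
  if p = 0 then klDiv2 μK μN
  else klDiv2 μK (mix p μK μN) + (((1 - p) / p : ℝ) : EReal) * klDiv2 μN (mix p μK μN)

/-!
Everything rests on the dual (Donsker–Varadhan type) formula
`KL(μ‖ν) = sup_g (∫ g dμ - ∫ (exp g - 1) dν)` over bounded continuous `g`, valid for finite
measures on a pseudo-metrizable space. For fixed `g` the right-hand side is
weakly continuous in `(μ, ν)`, so `KL` is a supremum of continuous functions, hence lower
semicontinuous.

The bound `≤` is the pointwise Fenchel–Young inequality `t y - (exp y - 1) ≤ t log t + 1 - t`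
at `t = dμ/dν`. For `≥`, if `μ ≪ ν` take `g = log` of `dμ/dν` clamped to `[exp (-n), exp n]`;
Fatou's lemma lets `n → ∞`. Otherwise take a large constant on a `ν`-null set charged by `μ`. In
both cases `g` is bounded and measurable, and replacing it by a bounded continuous function close
in `L¹(μ + ν)`, truncated from above, changes the objective very little since `exp` is Lipschitz on
half-lines `(-∞, B]`.

Then `F_p = (KL(μK‖μ_p) + (1-p)/p · KL(μN‖μ_p)) / log 2`, and the mixture `μ_p` depends
continuously on `(p, μK, μN)`. At `p = 0` the coefficient `(1 - p) / p` takes the junk value `0`,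
which is below its values nearby, so `p ↦ (1 - p) / p` is still lower semicontinuous on `[0, 1)`.
-/

open Real Set InformationTheory
open scoped ENNReal NNReal BoundedContinuousFunction

section Variational

variable {α : Type*} [MeasurableSpace α] {μ ν : Measure α}

noncomputable def klDual (g : α → ℝ) (μ ν : Measure α) : ℝ :=
  ∫ x, g x ∂μ - ∫ x, (exp (g x) - 1) ∂ν

lemma mul_sub_exp_sub_one_le_klFun {t : ℝ} (ht : 0 ≤ t) (y : ℝ) :
    t * y - (exp y - 1) ≤ klFun t := by
  rw [klFun_apply]
  rcases ht.eq_or_lt with rfl | ht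
  · simp [(exp_pos y).le]
  · have h := add_one_le_exp (y - log t)
    rw [exp_sub, exp_log ht, le_div_iff₀ ht] at h
    nlinarith

lemma integrable_rnDeriv_mul_sub_exp [SigmaFinite μ] [IsFiniteMeasure ν] (hac : μ ≪ ν)
    {g : α → ℝ} (hgμ : Integrable g μ) (hgν : Integrable (fun x => exp (g x)) ν) :
    Integrable (fun x => (μ.rnDeriv ν x).toReal * g x - (exp (g x) - 1)) ν :=
  ((integrable_rnDeriv_smul_iff hac).2 hgμ).sub (hgν.sub (integrable_const 1))

lemma klDual_eq_integral [SigmaFinite μ] [IsFiniteMeasure ν] (hac : μ ≪ ν) {g : α → ℝ}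
    (hgμ : Integrable g μ) (hgν : Integrable (fun x => exp (g x)) ν) :
    klDual g μ ν = ∫ x, ((μ.rnDeriv ν x).toReal * g x - (exp (g x) - 1)) ∂ν := by
  have hexp : Integrable (fun x => exp (g x) - 1) ν := hgν.sub (integrable_const 1)
  rw [klDual, ← integral_rnDeriv_smul hac,
    ← integral_sub ((integrable_rnDeriv_smul_iff hac).2 hgμ) hexp]
  rfl

lemma ofReal_klDual_le_klDiv [IsFiniteMeasure μ] [IsFiniteMeasure ν] {g : α → ℝ}
    (hgμ : Integrable g μ) (hgν : Integrable (fun x => exp (g x)) ν) :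
    ENNReal.ofReal (klDual g μ ν) ≤ klDiv μ ν := by
  by_cases htop : klDiv μ ν = ∞
  · simp [htop]
  obtain ⟨hac, hllr⟩ := klDiv_ne_top_iff.1 htop
  rw [ENNReal.ofReal_le_iff_le_toReal htop, toReal_klDiv_eq_integral_klFun hac,
    klDual_eq_integral hac hgμ hgν]
  exact integral_mono (integrable_rnDeriv_mul_sub_exp hac hgμ hgν)
    ((integrable_klFun_rnDeriv_iff hac).2 hllr) fun x =>
      mul_sub_exp_sub_one_le_klFun ENNReal.toReal_nonneg _

end Variational

-- Clamping away from `0` matters: Lean's `log 0 = 0` would break convergence to `klFun 0 = 1`.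
noncomputable def logClamp (n : ℕ) (t : ℝ) : ℝ := log (max (exp (-n)) (min t (exp n)))

lemma exp_logClamp (n : ℕ) (t : ℝ) : exp (logClamp n t) = max (exp (-n)) (min t (exp n)) :=
  exp_log ((exp_pos _).trans_le (le_max_left _ _))

lemma abs_logClamp_le (n : ℕ) (t : ℝ) : |logClamp n t| ≤ n := by
  have hpos : 0 < max (exp (-n)) (min t (exp n)) := (exp_pos _).trans_le (le_max_left _ _)
  refine abs_le.2 ⟨(le_log_iff_exp_le hpos).2 (le_max_left _ _), (log_le_iff_le_exp hpos).2 ?_⟩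
  exact max_le (exp_le_exp.2 (neg_le_self n.cast_nonneg)) (min_le_right _ _)

lemma mul_logClamp_sub_nonneg (n : ℕ) (t : ℝ) :
    0 ≤ t * logClamp n t - (exp (logClamp n t) - 1) := by
  set s := max (exp (-n)) (min t (exp n)) with hs_def
  have hs : 0 < s := (exp_pos _).trans_le (le_max_left _ _)
  have hexp_neg : exp (-n) ≤ 1 := exp_le_one_iff.2 (neg_nonpos.2 n.cast_nonneg)
  have hexp : 1 ≤ exp n := one_le_exp n.cast_nonneg
  -- `s` lies between `1` and `t`, so `t - s` and `log s` have the same sign;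
  -- then conclude from `t log s - (s - 1) = (t - s) log s + klFun s`
  have hsign : 0 ≤ (t - s) * log s := by
    rcases le_total t 1 with h | h
    · have hst : s = max (exp (-n)) t := by rw [hs_def, min_eq_left (h.trans hexp)]
      refine mul_nonneg_of_nonpos_of_nonpos (by rw [hst]; linarith [le_max_right (exp (-n)) t])
        (log_nonpos hs.le (by rw [hst]; exact max_le hexp_neg h))
    · refine mul_nonneg (sub_nonneg.2 (max_le (hexp_neg.trans h) (min_le_left _ _)))
        (log_nonneg ((le_min h hexp).trans (le_max_right _ _)))
  have hkl := klFun_nonneg hs.le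
  rw [klFun_apply] at hkl
  rw [logClamp, exp_log hs]
  nlinarith

lemma tendsto_mul_logClamp_sub {t : ℝ} (ht : 0 ≤ t) :
    Tendsto (fun n : ℕ => t * logClamp n t - (exp (logClamp n t) - 1)) atTop (𝓝 (klFun t)) := by
  have hs : Tendsto (fun n : ℕ => max (exp (-n)) (min t (exp n))) atTop (𝓝 t) := by
    have hmin : ∀ᶠ n : ℕ in atTop, min t (exp n) = t :=
      ((tendsto_exp_atTop.comp tendsto_natCast_atTop_atTop).eventually_ge_atTop t).mono
        fun n hn => min_eq_left hn
    have hmax : Tendsto (fun n : ℕ => max (exp (-n)) t) atTop (𝓝 (max 0 t)) :=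
      ((tendsto_exp_neg_atTop_nhds_zero.comp tendsto_natCast_atTop_atTop).max tendsto_const_nhds)
    rw [max_eq_right ht] at hmax
    exact hmax.congr' (hmin.mono fun n hn => by simp only [hn])
  have hlog : Tendsto (fun n : ℕ => t * logClamp n t) atTop (𝓝 (t * log t)) := by
    rcases ht.eq_or_lt with rfl | ht
    · simp
    · exact ((continuousAt_log ht.ne').tendsto.comp hs).const_mul t
  simp only [exp_logClamp]
  convert hlog.sub (hs.sub_const 1) using 2
  rw [klFun_apply]
  ring

section Approximation

variable {α : Type*} [MeasurableSpace α] {μ ν : Measure α} [IsFiniteMeasure μ]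

lemma exists_bounded_klDual_gt_of_not_ac (hac : ¬ μ ≪ ν) (r : ℝ) :
    ∃ f : α → ℝ, Measurable f ∧ (∃ B, ∀ x, |f x| ≤ B) ∧ r < klDual f μ ν := by
  obtain ⟨s, hs, hνs, hμs⟩ : ∃ s, MeasurableSet s ∧ ν s = 0 ∧ μ s ≠ 0 := by
    by_contra! h
    exact hac (.mk h)
  have hμs' : 0 < μ.real s := ENNReal.toReal_pos hμs (measure_ne_top μ s)
  set a := (|r| + 1) / μ.real s with ha
  refine ⟨s.indicator fun _ => a, measurable_const.indicator hs, ⟨|a|, fun x => ?_⟩, ?_⟩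
  · by_cases hx : x ∈ s <;> simp [hx]
  have hν0 : ∫ x, (exp (s.indicator (fun _ => a) x) - 1) ∂ν = 0 := by
    refine integral_eq_zero_of_ae ?_
    filter_upwards [measure_eq_zero_iff_ae_notMem.1 hνs] with x hx
    simp [hx]
  rw [klDual, hν0, integral_indicator_const a hs, smul_eq_mul, ha, mul_div_cancel₀ _ hμs'.ne']
  linarith [le_abs_self r]

variable [IsFiniteMeasure ν]

lemma exists_bounded_klDual_gt_of_ac (hac : μ ≪ ν) {r : ℝ} (hr : ENNReal.ofReal r < klDiv μ ν) :
    ∃ f : α → ℝ, Measurable f ∧ (∃ B, ∀ x, |f x| ≤ B) ∧ r < klDual f μ ν := by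
  set t : α → ℝ := fun x => (μ.rnDeriv ν x).toReal
  set f : ℕ → α → ℝ := fun n x => logClamp n (t x)
  have hfm (n : ℕ) : Measurable (f n) := by unfold f t logClamp; fun_prop
  have hfμ (n : ℕ) : Integrable (f n) μ :=
    .of_bound (hfm n).aestronglyMeasurable n (ae_of_all _ fun x => abs_logClamp_le n (t x))
  have hfν (n : ℕ) : Integrable (fun x => exp (f n x)) ν := by
    refine .of_bound (by fun_prop) (exp n) (ae_of_all _ fun x => ?_)
    rw [Real.norm_eq_abs, abs_exp]
    exact exp_le_exp.2 (abs_le.1 (abs_logClamp_le n (t x))).2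
  have hlim : klDiv μ ν ≤ liminf (fun n => ENNReal.ofReal (klDual (f n) μ ν)) atTop :=
    calc klDiv μ ν = ∫⁻ x, ENNReal.ofReal (klFun (t x)) ∂ν := klDiv_eq_lintegral_klFun_of_ac hac
      _ = ∫⁻ x, liminf (fun n => ENNReal.ofReal (t x * f n x - (exp (f n x) - 1))) atTop ∂ν :=
        lintegral_congr fun x => ((ENNReal.continuous_ofReal.tendsto _).comp
          (tendsto_mul_logClamp_sub ENNReal.toReal_nonneg)).liminf_eq.symm
      _ ≤ liminf (fun n => ∫⁻ x, ENNReal.ofReal (t x * f n x - (exp (f n x) - 1)) ∂ν) atTop :=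
        lintegral_liminf_le fun n => by unfold f t logClamp; fun_prop
      _ = liminf (fun n => ENNReal.ofReal (klDual (f n) μ ν)) atTop := by
        congr with n
        rw [klDual_eq_integral hac (hfμ n) (hfν n), ofReal_integral_eq_lintegral_ofReal
          (integrable_rnDeriv_mul_sub_exp hac (hfμ n) (hfν n))
          (ae_of_all _ fun x => mul_logClamp_sub_nonneg n (t x))]
  obtain ⟨n, hn⟩ := (eventually_lt_of_lt_liminf (hr.trans_le hlim)).exists
  exact ⟨f n, hfm n, ⟨n, fun x => abs_logClamp_le n (t x)⟩, (ENNReal.ofReal_lt_ofReal_iff'.1 hn).1⟩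

lemma exists_bounded_klDual_gt {r : ℝ} (hr : ENNReal.ofReal r < klDiv μ ν) :
    ∃ f : α → ℝ, Measurable f ∧ (∃ B, ∀ x, |f x| ≤ B) ∧ r < klDual f μ ν := by
  by_cases hac : μ ≪ ν
  · exact exists_bounded_klDual_gt_of_ac hac hr
  · exact exists_bounded_klDual_gt_of_not_ac hac r

end Approximation

lemma abs_exp_sub_exp_le {a b B : ℝ} (ha : a ≤ B) (hb : b ≤ B) :
    |exp a - exp b| ≤ exp B * |a - b| := by
  wlog hba : b ≤ a generalizing a b
  · rw [abs_sub_comm, abs_sub_comm a]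
    exact this hb ha (le_of_not_ge hba)
  have h := add_one_le_exp (b - a)
  calc |exp a - exp b| = exp a * (1 - exp (b - a)) := by
        rw [abs_of_nonneg (sub_nonneg.2 (exp_le_exp.2 hba)), mul_sub, ← exp_add]
        ring_nf
    _ ≤ exp a * (a - b) := mul_le_mul_of_nonneg_left (by linarith) (exp_pos a).le
    _ ≤ exp B * |a - b| := by
        rw [abs_of_nonneg (sub_nonneg.2 hba)]
        exact mul_le_mul_of_nonneg_right (exp_le_exp.2 ha) (sub_nonneg.2 hba)

section Continuous

variable {α : Type*} [MeasurableSpace α] {μ ν : Measure α} [IsFiniteMeasure ν]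

lemma klDual_sub_klDual_le {f h : α → ℝ} {B : ℝ} (hfi : Integrable f (μ + ν))
    (hhi : Integrable h (μ + ν)) (hf : ∀ x, f x ≤ B) (hh : ∀ x, h x ≤ B) :
    klDual f μ ν - klDual h μ ν ≤ (1 + exp B) * ∫ x, |f x - h x| ∂(μ + ν) := by
  obtain ⟨hfμ, hfν⟩ := integrable_add_measure.1 hfi
  obtain ⟨hhμ, hhν⟩ := integrable_add_measure.1 hhi
  have hexp {u : α → ℝ} (hu : Integrable u ν) (huB : ∀ x, u x ≤ B) :
      Integrable (fun x => exp (u x) - 1) ν := by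
    refine .sub (.of_bound (continuous_exp.comp_aestronglyMeasurable hu.1) (exp B)
      (ae_of_all _ fun x => ?_)) (integrable_const 1)
    rw [Real.norm_eq_abs, abs_exp]
    exact exp_le_exp.2 (huB x)
  have hμ : ∫ x, f x ∂μ - ∫ x, h x ∂μ ≤ ∫ x, |f x - h x| ∂μ := by
    rw [← integral_sub hfμ hhμ]
    exact integral_mono (hfμ.sub hhμ) (hfμ.sub hhμ).abs fun x => le_abs_self _
  have hν : ∫ x, (exp (h x) - 1) ∂ν - ∫ x, (exp (f x) - 1) ∂ν ≤
      exp B * ∫ x, |f x - h x| ∂ν := by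
    rw [← integral_sub (hexp hhν hh) (hexp hfν hf), ← integral_const_mul]
    refine integral_mono ((hexp hhν hh).sub (hexp hfν hf)) ((hfν.sub hhν).abs.const_mul _)
      fun x => ?_
    calc exp (h x) - 1 - (exp (f x) - 1) ≤ |exp (f x) - exp (h x)| := by
          rw [abs_sub_comm]; exact (le_abs_self _).trans_eq' (by ring)
      _ ≤ exp B * |f x - h x| := abs_exp_sub_exp_le (hf x) (hh x)
  have hsplit : ∫ x, |f x - h x| ∂(μ + ν) = ∫ x, |f x - h x| ∂μ + ∫ x, |f x - h x| ∂ν :=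
    integral_add_measure (hfμ.sub hhμ).abs (hfν.sub hhν).abs
  have h0μ : 0 ≤ ∫ x, |f x - h x| ∂μ := integral_nonneg fun x => abs_nonneg _
  have h0ν : 0 ≤ ∫ x, |f x - h x| ∂ν := integral_nonneg fun x => abs_nonneg _
  rw [hsplit, klDual, klDual]
  nlinarith [exp_pos B]

variable [IsFiniteMeasure μ] [TopologicalSpace α] [TopologicalSpace.PseudoMetrizableSpace α]
  [BorelSpace α]

lemma exists_boundedContinuous_klDual_gt {f : α → ℝ} (hfm : Measurable f) {B : ℝ}
    (hB : ∀ x, |f x| ≤ B) {r : ℝ} (hr : r < klDual f μ ν) : ∃ g : α →ᵇ ℝ, r < klDual g μ ν := by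
  have hfi : Integrable f (μ + ν) := .of_bound hfm.aestronglyMeasurable B (ae_of_all _ hB)
  set δ := klDual f μ ν - r
  have hK : 0 < 1 + exp B := by positivity
  obtain ⟨g, hg, -⟩ := hfi.exists_boundedContinuous_integral_sub_le
    (div_pos (sub_pos.2 hr) (mul_pos two_pos hK) : 0 < δ / (2 * (1 + exp B)))
  -- since `f ≤ B`, truncating `g` at `B` only brings it closer to `f`
  set h := g ⊓ BoundedContinuousFunction.const α B
  have hh (x : α) : h x = min (g x) B := rfl
  have hclose (x : α) : |f x - h x| ≤ ‖f x - g x‖ := by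
    calc |f x - h x| = |min (g x) B - min (f x) B| := by
          rw [hh, min_eq_left (abs_le.1 (hB x)).2, abs_sub_comm]
      _ ≤ |g x - f x| := by simpa using abs_min_sub_min_le_max (g x) B (f x) B
      _ = ‖f x - g x‖ := by rw [Real.norm_eq_abs, abs_sub_comm]
  have hdiff := klDual_sub_klDual_le hfi (h.integrable _) (fun x => (abs_le.1 (hB x)).2)
    fun x => (hh x).trans_le (min_le_right _ _)
  have hint : ∫ x, |f x - h x| ∂(μ + ν) ≤ δ / (2 * (1 + exp B)) :=
    (integral_mono (hfi.sub (h.integrable _)).abs (hfi.sub (g.integrable _)).norm hclose).trans hg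
  refine ⟨h, ?_⟩
  have : (1 + exp B) * (δ / (2 * (1 + exp B))) = δ / 2 := by field_simp
  nlinarith [mul_le_mul_of_nonneg_left hint hK.le]

end Continuous

lemma integrable_exp_boundedContinuousFunction {α : Type*} [MeasurableSpace α] [TopologicalSpace α]
    [OpensMeasurableSpace α] (μ : Measure α) [IsFiniteMeasure μ] (g : α →ᵇ ℝ) :
    Integrable (fun x => exp (g x)) μ := by
  refine .of_bound (by fun_prop) (exp ‖g‖) (ae_of_all _ fun x => ?_)
  rw [Real.norm_eq_abs, abs_exp]
  exact exp_le_exp.2 ((le_abs_self _).trans (g.norm_coe_le_norm x))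

section LowerSemicontinuity

variable {α : Type*} [MeasurableSpace α] [TopologicalSpace α]
  [TopologicalSpace.PseudoMetrizableSpace α] [BorelSpace α]

theorem klDiv_eq_iSup_klDual (μ ν : Measure α) [IsFiniteMeasure μ] [IsFiniteMeasure ν] :
    klDiv μ ν = ⨆ g : α →ᵇ ℝ, ENNReal.ofReal (klDual g μ ν) := by
  refine le_antisymm (le_of_forall_lt fun c hc => ?_) (iSup_le fun g =>
    ofReal_klDual_le_klDiv (g.integrable μ) (integrable_exp_boundedContinuousFunction ν g))
  have hc' : ENNReal.ofReal c.toReal < klDiv μ ν := by rwa [ENNReal.ofReal_toReal hc.ne_top]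
  rw [← ENNReal.ofReal_toReal hc.ne_top]
  obtain ⟨f, hfm, ⟨B, hB⟩, hf⟩ := exists_bounded_klDual_gt hc'
  obtain ⟨g, hg⟩ := exists_boundedContinuous_klDual_gt hfm hB hf
  exact lt_iSup_iff.2 ⟨g, ENNReal.ofReal_lt_ofReal_iff'.2 ⟨hg, ENNReal.toReal_nonneg.trans_lt hg⟩⟩

theorem lowerSemicontinuous_klDiv :
    LowerSemicontinuous fun q : FiniteMeasure α × FiniteMeasure α =>
      klDiv (q.1 : Measure α) q.2 := by
  simp_rw [klDiv_eq_iSup_klDual]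
  refine lowerSemicontinuous_iSup fun g => (ENNReal.continuous_ofReal.comp ?_).lowerSemicontinuous
  let G : α →ᵇ ℝ := .ofNormedAddCommGroup (fun x => exp (g x) - 1) (by fun_prop) (exp ‖g‖ + 1)
    fun x => by
      rw [Real.norm_eq_abs, abs_le]
      have := exp_le_exp.2 ((le_abs_self _).trans (g.norm_coe_le_norm x))
      constructor <;> linarith [exp_pos (g x), exp_pos ‖g‖]
  exact ((FiniteMeasure.continuous_integral_boundedContinuousFunction g).comp continuous_fst).sub
    ((FiniteMeasure.continuous_integral_boundedContinuousFunction G).comp continuous_snd)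

end LowerSemicontinuity

lemma klDiv2_eq_klDiv_div {α : Type*} [MeasurableSpace α] {μ ν : Measure α} [IsFiniteMeasure μ]
    [IsFiniteMeasure ν] (h : μ univ = ν univ) :
    klDiv2 μ ν = ((klDiv μ ν / ENNReal.ofReal (log 2) : ℝ≥0∞) : EReal) := by
  have hlog : 0 < log 2 := log_pos one_lt_two
  have hlogb : (fun x => logb 2 (μ.rnDeriv ν x).toReal) = fun x => llr μ ν x * (log 2)⁻¹ := rfl
  have hint : Integrable (fun x => llr μ ν x * (log 2)⁻¹) μ ↔ Integrable (llr μ ν) μ :=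
    integrable_mul_const_iff (isUnit_iff_ne_zero.2 (inv_ne_zero hlog.ne')) _
  rw [klDiv2, hlogb, hint]
  by_cases hk : μ ≪ ν ∧ Integrable (llr μ ν) μ
  · have hmass : ν.real univ - μ.real univ = 0 := by simp [measureReal_def, h]
    have hnonneg := integral_llr_add_sub_measure_univ_nonneg hk.1 hk.2
    rw [add_sub_assoc, hmass, add_zero] at hnonneg
    rw [if_pos hk, klDiv_of_ac_of_integrable hk.1 hk.2, add_sub_assoc, hmass, add_zero,
      ← ENNReal.ofReal_div_of_pos hlog, EReal.coe_ennreal_ofReal,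
      max_eq_left (div_nonneg hnonneg hlog.le), integral_mul_const, div_eq_mul_inv]
  · rw [if_neg hk, klDiv_eq_top_iff.2 fun hac => fun hi => hk ⟨hac, hi⟩,
      ENNReal.top_div_of_ne_top ENNReal.ofReal_ne_top, EReal.coe_ennreal_top]

lemma klDiv2_nonneg {α : Type*} [MeasurableSpace α] (μ ν : ProbabilityMeasure α) :
    0 ≤ klDiv2 (μ : Measure α) ν := by
  rw [klDiv2_eq_klDiv_div (by simp)]
  exact EReal.coe_ennreal_nonneg _

theorem lowerSemicontinuous_klDiv2 {α : Type*} [MeasurableSpace α] [TopologicalSpace α]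
    [TopologicalSpace.PseudoMetrizableSpace α] [BorelSpace α] :
    LowerSemicontinuous fun q : ProbabilityMeasure α × ProbabilityMeasure α =>
      klDiv2 (q.1 : Measure α) q.2 := by
  have hmono : Monotone fun x : ℝ≥0∞ => ((x / ENNReal.ofReal (log 2) : ℝ≥0∞) : EReal) :=
    fun a b hab => EReal.coe_ennreal_le_coe_ennreal_iff.2 (ENNReal.div_le_div_right hab _)
  have hcont : Continuous fun x : ℝ≥0∞ => ((x / ENNReal.ofReal (log 2) : ℝ≥0∞) : EReal) :=
    continuous_coe_ennreal_ereal.comp (ENNReal.continuous_div_const _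
      (ENNReal.ofReal_pos.2 (log_pos one_lt_two)).ne')
  convert hcont.comp_lowerSemicontinuous ((lowerSemicontinuous_klDiv (α := α)).comp
    (ProbabilityMeasure.toFiniteMeasure_continuous.prodMap
      ProbabilityMeasure.toFiniteMeasure_continuous)) hmono using 1
  ext q
  exact klDiv2_eq_klDiv_div (by simp)

section Mixture

variable {α : Type*} [MeasurableSpace α]

lemma mix_zero (μ ν : Measure α) : mix 0 μ ν = ν := by
  simp [mix]

lemma isProbabilityMeasure_mix {p : ℝ} (hp : p ∈ Icc 0 1) (μ ν : Measure α)
    [IsProbabilityMeasure μ] [IsProbabilityMeasure ν] : IsProbabilityMeasure (mix p μ ν) :=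
  ⟨by simp [mix, ← ENNReal.ofReal_add hp.1 (sub_nonneg.2 hp.2)]⟩

lemma integral_mix {p : ℝ} (hp : p ∈ Icc 0 1) {μ ν : Measure α} {f : α → ℝ}
    (hfμ : Integrable f μ) (hfν : Integrable f ν) :
    ∫ x, f x ∂(mix p μ ν) = p * ∫ x, f x ∂μ + (1 - p) * ∫ x, f x ∂ν := by
  rw [mix, integral_add_measure (hfμ.smul_measure ENNReal.ofReal_ne_top)
    (hfν.smul_measure ENNReal.ofReal_ne_top), integral_smul_measure, integral_smul_measure,
    ENNReal.toReal_ofReal hp.1, ENNReal.toReal_ofReal (sub_nonneg.2 hp.2), smul_eq_mul, smul_eq_mul]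

noncomputable def mixProb (p : unitInterval) (μ ν : ProbabilityMeasure α) : ProbabilityMeasure α :=
  ⟨mix p μ ν, isProbabilityMeasure_mix p.2 _ _⟩

lemma continuous_mixProb [TopologicalSpace α] [OpensMeasurableSpace α] :
    Continuous fun x : unitInterval × ProbabilityMeasure α × ProbabilityMeasure α =>
      mixProb x.1 x.2.1 x.2.2 := by
  refine ProbabilityMeasure.continuous_iff_forall_continuous_integral.2 fun f => ?_
  have hint := ProbabilityMeasure.continuous_integral_boundedContinuousFunction f
  simp only [mixProb, ProbabilityMeasure.coe_mk]
  simp_rw [integral_mix (Subtype.prop _) (f.integrable _) (f.integrable _)]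
  have hp : Continuous fun x : unitInterval × ProbabilityMeasure α × ProbabilityMeasure α =>
    (x.1 : ℝ) := continuous_subtype_val.comp continuous_fst
  exact (hp.mul (hint.comp (continuous_fst.comp continuous_snd))).add
    ((continuous_const.sub hp).mul (hint.comp (continuous_snd.comp continuous_snd)))

lemma Filter.Tendsto.mixProb [TopologicalSpace α] [OpensMeasurableSpace α] {ι : Type*}
    {l : Filter ι} {p : ι → unitInterval} {μ ν : ι → ProbabilityMeasure α} {p₀ : unitInterval}
    {μ₀ ν₀ : ProbabilityMeasure α} (hp : Tendsto p l (𝓝 p₀)) (hμ : Tendsto μ l (𝓝 μ₀))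
    (hν : Tendsto ν l (𝓝 ν₀)) :
    Tendsto (fun i => mixProb (p i) (μ i) (ν i)) l (𝓝 (mixProb p₀ μ₀ ν₀)) :=
  ((continuous_mixProb.tendsto _).comp (hp.prodMk_nhds (hμ.prodMk_nhds hν)) :)

-- At `p = 0` both sides reduce to `klDiv2 μK μN`, since `(1 - 0) / 0 = 0` in Lean.
lemma Fp_eq_klDiv2_add (p : ℝ) (μK μN : Measure α) :
    Fp p μK μN =
      klDiv2 μK (mix p μK μN) + (((1 - p) / p : ℝ) : EReal) * klDiv2 μN (mix p μK μN) := by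
  unfold Fp
  split_ifs with hp
  · simp [hp, mix_zero]
  · rfl

end Mixture

lemma coe_one_sub_div_self_le_liminf {p : ℝ} {pj : ℕ → ℝ} (hp : 0 ≤ p)
    (hpj : ∀ j, pj j ∈ Icc 0 1) (hlim : Tendsto pj atTop (𝓝 p)) :
    (((1 - p) / p : ℝ) : EReal) ≤ liminf (fun j => (((1 - pj j) / pj j : ℝ) : EReal)) atTop := by
  rcases hp.eq_or_lt with rfl | hp
  · simp only [div_zero, EReal.coe_zero]
    exact le_liminf_of_le (by isBoundedDefault) (Eventually.of_forall fun j =>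
      EReal.coe_nonneg.2 (div_nonneg (sub_nonneg.2 (hpj j).2) (hpj j).1))
  · exact (((continuous_coe_real_ereal.tendsto _).comp
      ((tendsto_const_nhds.sub hlim).div hlim hp.ne')).liminf_eq).ge

theorem stmt_1 (p : ℝ) (hp : p ∈ Set.Ico (0 : ℝ) 1)
    (pj : ℕ → ℝ) (hpj : ∀ j, pj j ∈ Set.Ico (0 : ℝ) 1)
    (hpj_tendsto : Tendsto pj atTop (nhds p))
    (μK μN : ProbabilityMeasure I01) (μKj μNj : ℕ → ProbabilityMeasure I01)
    (hK_tendsto : Tendsto μKj atTop (nhds μK))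
    (hN_tendsto : Tendsto μNj atTop (nhds μN)) :
    Fp p (μK : Measure I01) (μN : Measure I01)
      ≤ Filter.liminf (fun j => Fp (pj j) (μKj j : Measure I01) (μNj j : Measure I01)) atTop := by
  let m : ℕ → ProbabilityMeasure I01 :=
    fun j => mixProb ⟨pj j, Ico_subset_Icc_self (hpj j)⟩ (μKj j) (μNj j)
  let m₀ : ProbabilityMeasure I01 := mixProb ⟨p, Ico_subset_Icc_self hp⟩ μK μN
  have hm : Tendsto m atTop (𝓝 m₀) :=
    (tendsto_subtype_rng.2 hpj_tendsto).mixProb hK_tendsto hN_tendsto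
  let A := fun j => klDiv2 (μKj j : Measure I01) (m j)
  let B := fun j => klDiv2 (μNj j : Measure I01) (m j)
  let C := fun j => (((1 - pj j) / pj j : ℝ) : EReal)
  have hA : klDiv2 (μK : Measure I01) m₀ ≤ liminf A atTop :=
    (lowerSemicontinuous_klDiv2.le_liminf _).trans (hK_tendsto.prodMk_nhds hm).liminf_le_liminf_comp
  have hB : klDiv2 (μN : Measure I01) m₀ ≤ liminf B atTop :=
    (lowerSemicontinuous_klDiv2.le_liminf _).trans (hN_tendsto.prodMk_nhds hm).liminf_le_liminf_comp
  have hC := coe_one_sub_div_self_le_liminf hp.1 (fun j => Ico_subset_Icc_self (hpj j)) hpj_tendsto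
  have hB0 : 0 ≤ᶠ[atTop] B := Eventually.of_forall fun j => klDiv2_nonneg (μNj j) (m j)
  have hC0 : 0 ≤ᶠ[atTop] C := Eventually.of_forall fun j =>
    EReal.coe_nonneg.2 (div_nonneg (sub_nonneg.2 (hpj j).2.le) (hpj j).1)
  simp only [Fp_eq_klDiv2_add]
  calc _ ≤ liminf A atTop + liminf C atTop * liminf B atTop :=
        add_le_add hA (mul_le_mul hC hB (klDiv2_nonneg μN m₀)
          (le_liminf_of_le (by isBoundedDefault) hC0))
    _ ≤ liminf A atTop + liminf (C * B) atTop := add_le_add le_rfl (EReal.le_liminf_mul hC0 hB0)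
    _ ≤ _ := EReal.le_liminf_add
end

section
/- For fixed μK, μN ∈ P([0,1]), the map p ↦ F_p(μK, μN) is differentiable at every p ∈ (0,1), with derivative ∂/∂p F_p(μK, μN) = −KL(μN ‖ μ_p) / p², where μ_p = p·μK + (1−p)·μN. -/
/- STATEMENT 3: For fixed μK, μN ∈ P([0,1]), p ↦ F_p(μK, μN) is differentiable on (0,1)
   with derivative −KL(μN ‖ μ_p)/p².  (For p ∈ (0,1) the value F_p(μK, μN) is finite, so we
   state differentiability of the real-valued function p ↦ (F_p(μK, μN)).toReal.) -/

open MeasureTheory Filter Topology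

/-
Write `ξ = μK + μN` and `a, b` for the densities of `μK, μN` with respect to `ξ`, so that
`a + b = 1` and `μ_q` has density `m_q = q a + (1 - q) b ≥ min q (1 - q)`. Then
`F_q = ∫ a log₂ (a / m_q) dξ + (1 - q) / q · ∫ b log₂ (b / m_q) dξ`, and the integrands together
with their `q`-derivatives are bounded near `p`, so both integrals can be differentiated under the
integral sign. Weighted by `p` and `1 - p`, their derivatives cancel, since
`∫ m_p (b - a) / m_p dξ = μN(1) - μK(1) = 0`; what remains is the derivative `-1/p²` of the
weight `(1 - q) / q` times `KL(μN ‖ μ_p)`.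
-/
open MeasureTheory Filter Topology Real

lemma abs_mul_logb_self_le {t : ℝ} (h0 : 0 ≤ t) (h1 : t ≤ 1) : |t * logb 2 t| ≤ 2 := by
  rcases h0.eq_or_lt with rfl | ht
  · simp
  have hlog : |log t * t| < 1 := abs_log_mul_self_lt t ht h1
  have hl2 : (0.6931471803 : ℝ) < log 2 := log_two_gt_d9
  have h : t * logb 2 t = log t * t / log 2 := by rw [logb]; ring
  rw [h, abs_div, abs_of_pos (a := log 2) (by linarith), div_le_iff₀ (by linarith)]
  linarith

lemma abs_logb_le_abs_logb {c m : ℝ} (hc : 0 < c) (hcm : c ≤ m) (hm1 : m ≤ 1) :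
    |logb 2 m| ≤ |logb 2 c| := by
  have hm : logb 2 m ≤ 0 := logb_nonpos one_lt_two (hc.trans_le hcm).le hm1
  rw [abs_of_nonpos hm, abs_of_nonpos ((logb_le_logb_of_le one_lt_two hc hcm).trans hm)]
  linarith [logb_le_logb_of_le one_lt_two hc hcm]

lemma convexComb_mem_Icc {q a b : ℝ} (hq0 : 0 ≤ q) (hq1 : q ≤ 1) (ha : 0 ≤ a) (hb : 0 ≤ b)
    (hab : a + b = 1) : q * a + (1 - q) * b ∈ Set.Icc (min q (1 - q)) 1 := by
  constructor
  · calc min q (1 - q) = min q (1 - q) * a + min q (1 - q) * b := by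
          rw [← mul_add, hab, mul_one]
      _ ≤ q * a + (1 - q) * b := by gcongr <;> simp
  · nlinarith

lemma abs_mul_logb_sub_logb_le {w m c : ℝ} (hw0 : 0 ≤ w) (hw1 : w ≤ 1) (hc : 0 < c)
    (hcm : c ≤ m) (hm1 : m ≤ 1) : |w * (logb 2 w - logb 2 m)| ≤ 2 + |logb 2 c| :=
  calc |w * (logb 2 w - logb 2 m)| ≤ |w * logb 2 w| + |w| * |logb 2 m| := by
        rw [mul_sub, ← abs_mul]; exact abs_sub _ _
    _ ≤ 2 + 1 * |logb 2 c| :=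
        add_le_add (abs_mul_logb_self_le hw0 hw1) (mul_le_mul (abs_le.2 ⟨by linarith, hw1⟩)
          (abs_logb_le_abs_logb hc hcm hm1) (abs_nonneg _) zero_le_one)
    _ = 2 + |logb 2 c| := by rw [one_mul]

lemma hasDerivAt_mul_logb_sub_logb_convexComb (w a b : ℝ) {q : ℝ}
    (hm : 0 < q * a + (1 - q) * b) :
    HasDerivAt (fun q => w * (logb 2 w - logb 2 (q * a + (1 - q) * b)))
      (w * (b - a) / ((q * a + (1 - q) * b) * log 2)) q := by
  have hlin : HasDerivAt (fun q => q * a + (1 - q) * b) (a - b) q :=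
    ((hasDerivAt_id' q).mul_const a).add (((hasDerivAt_id' q).const_sub 1).mul_const b)
      |>.congr_deriv (by ring)
  exact (((hlin.log hm.ne').div_const (log 2)).const_sub (logb 2 w)).const_mul w
    |>.congr_deriv (by rw [div_div]; ring)

@[fun_prop]
lemma Real.measurable_logb (b : ℝ) : Measurable (logb b) :=
  measurable_log.div_const _

section Densities

variable {α : Type*} [MeasurableSpace α] {ξ : Measure α} {a b w : α → ℝ} {p : ℝ}

/-- For densities `a, b, w` of `μ, ν, κ` with respect to `ξ`, this is the base-2
`KL(κ ‖ q μ + (1 - q) ν)`. -/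
noncomputable def klToMix (ξ : Measure α) (a b w : α → ℝ) (q : ℝ) : ℝ :=
  ∫ x, w x * (logb 2 (w x) - logb 2 (q * a x + (1 - q) * b x)) ∂ξ

lemma klToMix_swap (ξ : Measure α) (a b w : α → ℝ) (q : ℝ) :
    klToMix ξ b a w (1 - q) = klToMix ξ a b w q := by
  simp only [klToMix, sub_sub_cancel, add_comm]

variable [IsFiniteMeasure ξ] (ha : Measurable a) (hb : Measurable b)
  (ha0 : ∀ x, 0 ≤ a x) (hb0 : ∀ x, 0 ≤ b x) (hab : ∀ᵐ x ∂ξ, a x + b x = 1)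
include ha hb ha0 hb0 hab

lemma integrable_mul_logb_sub_logb_convexComb (hw : Measurable w) (hw0 : ∀ x, 0 ≤ w x)
    (hw1 : ∀ᵐ x ∂ξ, w x ≤ 1) (hp : p ∈ Set.Ioo 0 1) :
    Integrable (fun x => w x * (logb 2 (w x) - logb 2 (p * a x + (1 - p) * b x))) ξ := by
  refine Integrable.mono' (integrable_const (2 + |logb 2 (min p (1 - p))|)) (by fun_prop) ?_
  filter_upwards [hab, hw1] with x h1 hwx
  obtain ⟨hlo, hhi⟩ := convexComb_mem_Icc hp.1.le hp.2.le (ha0 x) (hb0 x) h1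
  exact abs_mul_logb_sub_logb_le (hw0 x) hwx (lt_min hp.1 (by linarith [hp.2])) hlo hhi

lemma hasDerivAt_klToMix (hw : Measurable w) (hw0 : ∀ x, 0 ≤ w x) (hw1 : ∀ᵐ x ∂ξ, w x ≤ 1)
    (hp : p ∈ Set.Ioo 0 1) :
    Integrable (fun x => w x * (b x - a x) / ((p * a x + (1 - p) * b x) * log 2)) ξ ∧
    HasDerivAt (klToMix ξ a b w)
      (∫ x, w x * (b x - a x) / ((p * a x + (1 - p) * b x) * log 2) ∂ξ) p := by
  set ε := min p (1 - p) / 2 with hεdef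
  have hε : 0 < ε := half_pos (lt_min hp.1 (by linarith [hp.2]))
  have hmix : ∀ q ∈ Metric.ball p ε, ∀ x, a x + b x = 1 →
      q * a x + (1 - q) * b x ∈ Set.Icc ε 1 := by
    intro q hq x h1
    rw [Metric.mem_ball, Real.dist_eq, abs_lt] at hq
    have hεq : ε ≤ min q (1 - q) := le_min (by linarith [min_le_left p (1 - p)])
      (by linarith [min_le_right p (1 - p)])
    have hq0 := (min_le_left q (1 - q)).trans' hεq
    have hq1 := (min_le_right q (1 - q)).trans' hεq
    obtain ⟨hlo, hhi⟩ :=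
      convexComb_mem_Icc (q := q) (by linarith) (by linarith) (ha0 x) (hb0 x) h1
    exact ⟨hεq.trans hlo, hhi⟩
  refine hasDerivAt_integral_of_dominated_loc_of_deriv_le (bound := fun _ => 1 / (ε * log 2))
    (F := fun q x => w x * (logb 2 (w x) - logb 2 (q * a x + (1 - q) * b x)))
    (F' := fun q x => w x * (b x - a x) / ((q * a x + (1 - q) * b x) * log 2))
    (Metric.ball_mem_nhds p hε) (Eventually.of_forall fun q => by fun_prop)
    (integrable_mul_logb_sub_logb_convexComb ha hb ha0 hb0 hab hw hw0 hw1 hp)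
    (Measurable.aestronglyMeasurable (by fun_prop)) ?_
    (integrable_const _) ?_
  · filter_upwards [hab, hw1] with x h1 hwx q hq
    obtain ⟨hlo, -⟩ := hmix q hq x h1
    have hl2 : 0 < log 2 := log_pos one_lt_two
    rw [Real.norm_eq_abs, abs_div, abs_mul, abs_of_pos (mul_pos (hε.trans_le hlo) hl2)]
    have hba : |b x - a x| ≤ 1 := abs_le.2 ⟨by linarith [hb0 x], by linarith [ha0 x]⟩
    have : |w x| * |b x - a x| ≤ 1 :=
      mul_le_one₀ ((abs_of_nonneg (hw0 x)).trans_le hwx) (abs_nonneg _) hba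
    gcongr
  · filter_upwards [hab] with x h1 q hq
    exact hasDerivAt_mul_logb_sub_logb_convexComb (w x) (a x) (b x)
      (hε.trans_le (hmix q hq x h1).1)

theorem hasDerivAt_klToMix_add_div_mul_klToMix (hp : p ∈ Set.Ioo 0 1)
    (hint : ∫ x, a x ∂ξ = ∫ x, b x ∂ξ) :
    HasDerivAt (fun q => klToMix ξ a b a q + (1 - q) / q * klToMix ξ a b b q)
      (-klToMix ξ a b b p / p ^ 2) p := by
  have ha1 : ∀ᵐ x ∂ξ, a x ≤ 1 := hab.mono fun x h1 => by linarith [hb0 x]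
  have hb1 : ∀ᵐ x ∂ξ, b x ≤ 1 := hab.mono fun x h1 => by linarith [ha0 x]
  obtain ⟨hIa, hDa⟩ := hasDerivAt_klToMix ha hb ha0 hb0 hab ha ha0 ha1 hp
  obtain ⟨hIb, hDb⟩ := hasDerivAt_klToMix ha hb ha0 hb0 hab hb hb0 hb1 hp
  set Da := ∫ x, a x * (b x - a x) / ((p * a x + (1 - p) * b x) * log 2) ∂ξ
  set Db := ∫ x, b x * (b x - a x) / ((p * a x + (1 - p) * b x) * log 2) ∂ξ
  -- the `p`- and `(1 - p)`-weighted integrands add up to `(b - a) / log 2`, of integral zero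
  have hcancel : p * Da + (1 - p) * Db = 0 := by
    have hsum : ∀ᵐ x ∂ξ, p * (a x * (b x - a x) / ((p * a x + (1 - p) * b x) * log 2))
        + (1 - p) * (b x * (b x - a x) / ((p * a x + (1 - p) * b x) * log 2))
        = (b x - a x) / log 2 := by
      filter_upwards [hab] with x h1
      have hm := convexComb_mem_Icc hp.1.le hp.2.le (ha0 x) (hb0 x) h1
      have hm0 : 0 < p * a x + (1 - p) * b x :=
        (lt_min hp.1 (by linarith [hp.2])).trans_le hm.1
      calc _ = (p * a x + (1 - p) * b x) * (b x - a x)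
            / ((p * a x + (1 - p) * b x) * log 2) := by ring
        _ = _ := mul_div_mul_left _ _ hm0.ne'
    have hIa' := Integrable.of_bound ha.aestronglyMeasurable 1
      (ha1.mono fun x h => abs_le.2 ⟨by linarith [ha0 x], h⟩)
    have hIb' := Integrable.of_bound hb.aestronglyMeasurable 1
      (hb1.mono fun x h => abs_le.2 ⟨by linarith [hb0 x], h⟩)
    rw [← integral_const_mul, ← integral_const_mul,
      ← integral_add (hIa.const_mul p) (hIb.const_mul _), integral_congr_ae hsum, integral_div,
      integral_sub hIb' hIa', hint, sub_self, zero_div]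
  have hweight : HasDerivAt (fun q => (1 - q) / q) (-1 / p ^ 2) p :=
    ((hasDerivAt_id' p).const_sub 1).div (hasDerivAt_id' p) hp.1.ne' |>.congr_deriv (by ring)
  refine (hDa.add (hweight.mul hDb)).congr_deriv ?_
  have hDa' : Da = -((1 - p) / p * Db) := by
    field_simp [hp.1.ne']
    linarith
  rw [hDa']
  ring

end Densities

section Mixture

variable {α : Type*} [MeasurableSpace α]

lemma klDiv2_eq_integral_rnDeriv {μ ρ ξ : Measure α} [SigmaFinite μ] [SigmaFinite ρ]
    [SigmaFinite ξ] (hμρ : μ ≪ ρ) (hρξ : ρ ≪ ξ)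
    (hint : Integrable (fun x => (μ.rnDeriv ξ x).toReal *
      (logb 2 (μ.rnDeriv ξ x).toReal - logb 2 (ρ.rnDeriv ξ x).toReal)) ξ) :
    klDiv2 μ ρ = ((∫ x, (μ.rnDeriv ξ x).toReal *
      (logb 2 (μ.rnDeriv ξ x).toReal - logb 2 (ρ.rnDeriv ξ x).toReal) ∂ξ : ℝ) : EReal) := by
  have hμξ := hμρ.trans hρξ
  have hlog : ∀ᵐ x ∂μ, logb 2 (μ.rnDeriv ρ x).toReal
      = logb 2 (μ.rnDeriv ξ x).toReal - logb 2 (ρ.rnDeriv ξ x).toReal := by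
    filter_upwards [hμρ (Measure.rnDeriv_eq_div hμξ hρξ), Measure.rnDeriv_pos hμξ,
      hμξ (μ.rnDeriv_lt_top ξ), hμρ (Measure.rnDeriv_pos hρξ), hμξ (ρ.rnDeriv_lt_top ξ)]
      with x hdiv hμ0 hμtop hρ0 hρtop
    rw [hdiv, ENNReal.toReal_div, logb_div (ENNReal.toReal_pos hμ0.ne' hμtop.ne).ne'
      (ENNReal.toReal_pos hρ0.ne' hρtop.ne).ne']
  have hint' : Integrable (fun x => logb 2 (μ.rnDeriv ρ x).toReal) μ :=
    ((integrable_toReal_rnDeriv_mul_iff hμξ).1 hint).congr (hlog.mono fun _ h => h.symm)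
  rw [klDiv2, if_pos ⟨hμρ, hint'⟩, integral_congr_ae hlog, integral_toReal_rnDeriv_mul hμξ]

instance isFiniteMeasure_mix (q : ℝ) (μ ν : Measure α) [IsFiniteMeasure μ] [IsFiniteMeasure ν] :
    IsFiniteMeasure (mix q μ ν) := by
  have := μ.smul_finite (ENNReal.ofReal_ne_top (r := q))
  have := ν.smul_finite (ENNReal.ofReal_ne_top (r := 1 - q))
  unfold mix
  infer_instance

lemma toReal_rnDeriv_mix (μ ν ξ : Measure α) [IsFiniteMeasure μ] [IsFiniteMeasure ν]
    [SigmaFinite ξ] {q : ℝ} (hq0 : 0 ≤ q) (hq1 : q ≤ 1) :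
    ∀ᵐ x ∂ξ, ((mix q μ ν).rnDeriv ξ x).toReal
      = q * (μ.rnDeriv ξ x).toReal + (1 - q) * (ν.rnDeriv ξ x).toReal := by
  have := μ.smul_finite (ENNReal.ofReal_ne_top (r := q))
  have := ν.smul_finite (ENNReal.ofReal_ne_top (r := 1 - q))
  filter_upwards [Measure.rnDeriv_add' (ENNReal.ofReal q • μ) (ENNReal.ofReal (1 - q) • ν) ξ,
    Measure.rnDeriv_smul_left_of_ne_top' μ ξ ENNReal.ofReal_ne_top,
    Measure.rnDeriv_smul_left_of_ne_top' ν ξ ENNReal.ofReal_ne_top,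
    μ.rnDeriv_lt_top ξ, ν.rnDeriv_lt_top ξ] with x hadd hμ hν hμtop hνtop
  rw [mix, hadd, Pi.add_apply, hμ, hν, Pi.smul_apply, Pi.smul_apply, smul_eq_mul, smul_eq_mul,
    ENNReal.toReal_add (by finiteness) (by finiteness), ENNReal.toReal_mul, ENNReal.toReal_mul,
    ENNReal.toReal_ofReal hq0, ENNReal.toReal_ofReal (by linarith)]

lemma toReal_rnDeriv_add_toReal_rnDeriv_eq_one (μ ν : Measure α) [IsFiniteMeasure μ]
    [IsFiniteMeasure ν] :
    ∀ᵐ x ∂(μ + ν), (μ.rnDeriv (μ + ν) x).toReal + (ν.rnDeriv (μ + ν) x).toReal = 1 := by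
  filter_upwards [Measure.rnDeriv_add' μ ν (μ + ν), (μ + ν).rnDeriv_self,
    μ.rnDeriv_lt_top (μ + ν), ν.rnDeriv_lt_top (μ + ν)] with x hadd hself hμ hν
  rw [← ENNReal.toReal_add hμ.ne hν.ne, ← Pi.add_apply, ← hadd, hself, ENNReal.toReal_one]

lemma klDiv2_mix_left (μ ν : Measure α) [IsFiniteMeasure μ] [IsFiniteMeasure ν] {q : ℝ}
    (hq : q ∈ Set.Ioo 0 1) :
    klDiv2 μ (mix q μ ν) = klToMix (μ + ν) (fun x => (μ.rnDeriv (μ + ν) x).toReal)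
      (fun x => (ν.rnDeriv (μ + ν) x).toReal) (fun x => (μ.rnDeriv (μ + ν) x).toReal) q := by
  have hμξ : μ ≪ μ + ν := Measure.AbsolutelyContinuous.rfl.add_right ν
  have hνξ : ν ≪ μ + ν := Measure.AbsolutelyContinuous.rfl.add_right' μ
  have hρξ : mix q μ ν ≪ μ + ν := (hμξ.smul_left _).add_left (hνξ.smul_left _)
  have hμρ : μ ≪ mix q μ ν :=
    (Measure.absolutelyContinuous_smul (by simpa using hq.1)).add_right _
  have hdens : (fun x => (μ.rnDeriv (μ + ν) x).toReal * (logb 2 (μ.rnDeriv (μ + ν) x).toReal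
      - logb 2 ((mix q μ ν).rnDeriv (μ + ν) x).toReal)) =ᵐ[μ + ν]
      fun x => (μ.rnDeriv (μ + ν) x).toReal * (logb 2 (μ.rnDeriv (μ + ν) x).toReal
        - logb 2 (q * (μ.rnDeriv (μ + ν) x).toReal + (1 - q) * (ν.rnDeriv (μ + ν) x).toReal)) :=
    (toReal_rnDeriv_mix μ ν (μ + ν) hq.1.le hq.2.le).mono fun x h => by simp only [h]
  have hsum := toReal_rnDeriv_add_toReal_rnDeriv_eq_one μ ν
  have ha := (μ.measurable_rnDeriv (μ + ν)).ennreal_toReal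
  have hint := integrable_mul_logb_sub_logb_convexComb ha
    (ν.measurable_rnDeriv (μ + ν)).ennreal_toReal (fun _ => ENNReal.toReal_nonneg)
    (fun _ => ENNReal.toReal_nonneg) hsum ha (fun _ => ENNReal.toReal_nonneg)
    (hsum.mono fun x h => by linarith [ENNReal.toReal_nonneg (a := ν.rnDeriv (μ + ν) x)]) hq
  rw [klDiv2_eq_integral_rnDeriv hμρ hρξ (hint.congr hdens.symm), integral_congr_ae hdens]
  rfl

lemma mix_comm (q : ℝ) (μ ν : Measure α) : mix q μ ν = mix (1 - q) ν μ := by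
  rw [mix, mix, sub_sub_cancel, add_comm]

lemma klDiv2_mix_right (μ ν : Measure α) [IsFiniteMeasure μ] [IsFiniteMeasure ν] {q : ℝ}
    (hq : q ∈ Set.Ioo 0 1) :
    klDiv2 ν (mix q μ ν) = klToMix (μ + ν) (fun x => (μ.rnDeriv (μ + ν) x).toReal)
      (fun x => (ν.rnDeriv (μ + ν) x).toReal) (fun x => (ν.rnDeriv (μ + ν) x).toReal) q := by
  rw [mix_comm, klDiv2_mix_left ν μ ⟨by linarith [hq.2], by linarith [hq.1]⟩, add_comm ν μ,
    klToMix_swap]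

end Mixture

theorem stmt_3 (μK μN : Measure I01) [IsProbabilityMeasure μK] [IsProbabilityMeasure μN]
    (p : ℝ) (hp : p ∈ Set.Ioo (0 : ℝ) 1) :
    HasDerivAt (fun q : ℝ => (Fp q μK μN).toReal)
      (-(klDiv2 μN (mix p μK μN)).toReal / p ^ 2) p := by
  set a := fun x => (μK.rnDeriv (μK + μN) x).toReal
  set b := fun x => (μN.rnDeriv (μK + μN) x).toReal
  have hF : (fun q : ℝ => (Fp q μK μN).toReal) =ᶠ[𝓝 p]
      fun q => klToMix (μK + μN) a b a q + (1 - q) / q * klToMix (μK + μN) a b b q := by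
    filter_upwards [Ioo_mem_nhds hp.1 hp.2] with q hq
    rw [Fp, if_neg hq.1.ne', klDiv2_mix_left μK μN hq, klDiv2_mix_right μK μN hq,
      ← EReal.coe_mul, ← EReal.coe_add, EReal.toReal_coe]
  have hint : ∫ x, a x ∂(μK + μN) = ∫ x, b x ∂(μK + μN) := by
    rw [Measure.integral_toReal_rnDeriv (Measure.AbsolutelyContinuous.rfl.add_right μN),
      Measure.integral_toReal_rnDeriv (Measure.AbsolutelyContinuous.rfl.add_right' μK)]
    simp
  rw [klDiv2_mix_right μK μN hp, EReal.toReal_coe]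
  exact (hasDerivAt_klToMix_add_div_mul_klToMix (μK.measurable_rnDeriv _).ennreal_toReal
    (μN.measurable_rnDeriv _).ennreal_toReal (fun _ => ENNReal.toReal_nonneg)
    (fun _ => ENNReal.toReal_nonneg) (toReal_rnDeriv_add_toReal_rnDeriv_eq_one μK μN) hp
    hint).congr_of_eventuallyEq hF
end

section
/- Fix μK, μN ∈ P([0,1]) and define I(p) := p·KL(μK ‖ μ_p) + (1−p)·KL(μN ‖ μ_p) for p ∈ (0,1), where μ_p = p·μK + (1−p)·μN. Then I is differentiable on (0,1) with I′(p) = KL(μK ‖ μ_p) − KL(μN ‖ μ_p). -/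
/- STATEMENT 4: I(p) := p·KL(μK ‖ μ_p) + (1−p)·KL(μN ‖ μ_p) is differentiable on (0,1)
   with I′(p) = KL(μK ‖ μ_p) − KL(μN ‖ μ_p).  (For p ∈ (0,1) both μK and μN are absolutely
   continuous w.r.t. μ_p, with bounded densities, so both KL terms are finite and we work
   with the real values of the base-2 KL divergence.) -/

open MeasureTheory Filter Topology

/-- `I(p) = p·KL(μK ‖ μ_p) + (1−p)·KL(μN ‖ μ_p)` (real-valued, base-2 KL). -/
noncomputable def mutualInfoFun {α : Type*} [MeasurableSpace α]
    (μK μN : Measure α) (p : ℝ) : ℝ :=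
  p * (klDiv2 μK (mix p μK μN)).toReal + (1 - p) * (klDiv2 μN (mix p μK μN)).toReal

/-!
Put `ν = μK + μN`, `f = dμK/dν`, `g = dμN/dν`, so that `f + g = 1` `ν`-a.e. and `μ_t` has density
`t f + (1 - t) g ≥ min t (1 - t)`. With `φ = negMulLog`, the integrand of `I(t)` against `ν` is
`(φ(t f + (1 - t) g) - t φ(f) - (1 - t) φ(g)) / log 2`, whose `t`-derivative is bounded uniformly
for `t` near `p`, so we may differentiate under the integral sign. The derivative is the difference
of the two KL integrands minus `(f - g) / log 2`, and the latter integrates to `0` because `μK`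
and `μN` have the same mass.
-/

open Real
open scoped ENNReal

-- With `a = dμ/dν` and `b = dμ'/dν`, the `ν`-integrand of `KL(μ ‖ t • μ + (1 - t) • μ')`.
noncomputable def klMixIntegrand (t a b : ℝ) : ℝ := a * logb 2 (a / (t * a + (1 - t) * b))

lemma mul_logb_div_eq (a : ℝ) {m : ℝ} (hm : m ≠ 0) :
    a * logb 2 (a / m) = -(negMulLog a + a * log m) / log 2 := by
  rcases eq_or_ne a 0 with rfl | ha
  · simp
  · rw [logb, log_div ha hm, negMulLog]
    ring

lemma klMixIntegrand_eq {t a b : ℝ} (hm : t * a + (1 - t) * b ≠ 0) :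
    klMixIntegrand t a b = -(negMulLog a + a * log (t * a + (1 - t) * b)) / log 2 :=
  mul_logb_div_eq a hm

lemma klMixIntegrand_one_sub (t a b : ℝ) :
    klMixIntegrand (1 - t) b a = b * logb 2 (b / (t * a + (1 - t) * b)) := by
  rw [klMixIntegrand]
  congr 3
  ring

lemma mixKL_eq_negMulLog {t a b : ℝ} (hm : t * a + (1 - t) * b ≠ 0) :
    t * klMixIntegrand t a b + (1 - t) * klMixIntegrand (1 - t) b a
      = (negMulLog (t * a + (1 - t) * b) - t * negMulLog a - (1 - t) * negMulLog b) / log 2 := by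
  rw [klMixIntegrand_eq hm, klMixIntegrand_one_sub, mul_logb_div_eq b hm]
  simp only [negMulLog]
  ring

lemma hasDerivAt_mixKL {t a b : ℝ} (hm : t * a + (1 - t) * b ≠ 0) :
    HasDerivAt (fun s => s * klMixIntegrand s a b + (1 - s) * klMixIntegrand (1 - s) b a)
      (klMixIntegrand t a b - klMixIntegrand (1 - t) b a - (a - b) / log 2) t := by
  have hweight : HasDerivAt (fun s : ℝ => 1 - s) (-1) t := (hasDerivAt_id t).const_sub 1
  have hmix : HasDerivAt (fun s => s * a + (1 - s) * b) (a - b) t := by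
    refine (((hasDerivAt_id' t).mul_const a).add (hweight.mul_const b)).congr_deriv ?_
    ring
  have hentropy := ((((hasDerivAt_negMulLog hm).comp t hmix).sub
    ((hasDerivAt_id t).mul_const (negMulLog a))).sub
    (hweight.mul_const (negMulLog b))).div_const (log 2)
  refine (hentropy.congr_of_eventuallyEq ?_).congr_deriv ?_
  · filter_upwards [hmix.continuousAt.eventually_ne hm] with s hs
    exact mixKL_eq_negMulLog hs
  · rw [klMixIntegrand_eq hm, klMixIntegrand_one_sub, mul_logb_div_eq b hm]
    simp only [negMulLog]
    ring

lemma convex_combination_pos {t a b : ℝ} (ht0 : 0 < t) (ht1 : t < 1) (ha : 0 ≤ a) (hb : 0 ≤ b)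
    (hab : a + b = 1) : 0 < t * a + (1 - t) * b := by
  nlinarith [mul_nonneg (sq_nonneg t) ha, mul_nonneg (sq_nonneg (1 - t)) hb,
    mul_pos ht0 (sub_pos.mpr ht1)]

lemma abs_klMixIntegrand_le {t a b c : ℝ} (hc : 0 < c) (hct : c ≤ t) (hct' : c ≤ 1 - t)
    (ha : 0 ≤ a) (hb : 0 ≤ b) (hab : a + b = 1) :
    |klMixIntegrand t a b| ≤ (1 + |log c|) / log 2 := by
  set m := t * a + (1 - t) * b
  have hcm : c ≤ m := by nlinarith
  have hm1 : m ≤ 1 := by nlinarith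
  have hlog : |log m| ≤ |log c| := by
    rw [abs_of_nonpos (log_nonpos (hc.trans_le hcm).le hm1),
      abs_of_nonpos (log_nonpos hc.le (hcm.trans hm1))]
    linarith [log_le_log hc hcm]
  have hentropy : |negMulLog a| ≤ 1 := by
    rw [abs_of_nonneg (negMulLog_nonneg ha (by linarith))]
    linarith [negMulLog_le_one_sub_self ha]
  rw [klMixIntegrand_eq (hc.trans_le hcm).ne', abs_div, abs_neg, abs_of_pos (log_pos one_lt_two)]
  gcongr
  calc |negMulLog a + a * log m| ≤ |negMulLog a| + |a * log m| := abs_add_le _ _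
    _ = |negMulLog a| + a * |log m| := by rw [abs_mul, abs_of_nonneg ha]
    _ ≤ 1 + 1 * |log c| := by gcongr; linarith
    _ = 1 + |log c| := by ring

lemma abs_deriv_mixKL_le {t a b c : ℝ} (hc : 0 < c) (hct : c ≤ t) (hct' : c ≤ 1 - t)
    (ha : 0 ≤ a) (hb : 0 ≤ b) (hab : a + b = 1) :
    |klMixIntegrand t a b - klMixIntegrand (1 - t) b a - (a - b) / log 2|
      ≤ 2 * ((1 + |log c|) / log 2) + 1 / log 2 := by
  have hK := abs_klMixIntegrand_le hc hct hct' ha hb hab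
  have hK' := abs_klMixIntegrand_le hc hct' (by linarith) hb ha (by linarith)
  have hdiff : |(a - b) / log 2| ≤ 1 / log 2 := by
    rw [abs_div, abs_of_pos (log_pos one_lt_two)]
    gcongr
    exact abs_le.mpr ⟨by linarith, by linarith⟩
  linarith [abs_sub (klMixIntegrand t a b - klMixIntegrand (1 - t) b a) ((a - b) / log 2),
    abs_sub (klMixIntegrand t a b) (klMixIntegrand (1 - t) b a)]

lemma Measurable.klMixIntegrand {α : Type*} [MeasurableSpace α] {f g : α → ℝ}
    (hf : Measurable f) (hg : Measurable g) (t : ℝ) :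
    Measurable fun x => klMixIntegrand t (f x) (g x) := by
  unfold _root_.klMixIntegrand logb
  fun_prop

section Densities

variable {α : Type*} [MeasurableSpace α] {ν : Measure α} [IsFiniteMeasure ν] {f g : α → ℝ}

lemma integrable_klMixIntegrand (hf : Measurable f) (hg : Measurable g)
    (hfg : ∀ᵐ x ∂ν, 0 ≤ f x ∧ 0 ≤ g x ∧ f x + g x = 1) {t : ℝ} (ht0 : 0 < t) (ht1 : t < 1) :
    Integrable (fun x => klMixIntegrand t (f x) (g x)) ν := by
  refine (integrable_const ((1 + |log (min t (1 - t))|) / log 2)).mono'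
    (hf.klMixIntegrand hg t).aestronglyMeasurable ?_
  filter_upwards [hfg] with x ⟨hfx, hgx, hsum⟩
  exact abs_klMixIntegrand_le (lt_min ht0 (by linarith)) (min_le_left _ _) (min_le_right _ _)
    hfx hgx hsum

lemma hasDerivAt_integral_mixKL (hf : Measurable f) (hg : Measurable g)
    (hfg : ∀ᵐ x ∂ν, 0 ≤ f x ∧ 0 ≤ g x ∧ f x + g x = 1) {p : ℝ} (hp0 : 0 < p) (hp1 : p < 1) :
    HasDerivAt
      (fun t => ∫ x, t * klMixIntegrand t (f x) (g x)
        + (1 - t) * klMixIntegrand (1 - t) (g x) (f x) ∂ν)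
      (∫ x, klMixIntegrand p (f x) (g x) - klMixIntegrand (1 - p) (g x) (f x)
        - (f x - g x) / log 2 ∂ν) p := by
  have hgf : ∀ᵐ x ∂ν, 0 ≤ g x ∧ 0 ≤ f x ∧ g x + f x = 1 :=
    hfg.mono fun x ⟨hfx, hgx, hsum⟩ => ⟨hgx, hfx, by linarith⟩
  set c := min p (1 - p) / 2 with hc_def
  have hc : 0 < c := by have := lt_min hp0 (sub_pos.mpr hp1); positivity
  have hball : ∀ t ∈ Metric.ball p c, c ≤ t ∧ c ≤ 1 - t := by
    intro t ht
    rw [Metric.mem_ball, Real.dist_eq, abs_lt] at ht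
    constructor <;> linarith [min_le_left p (1 - p), min_le_right p (1 - p), hc_def]
  have hderiv : ∀ᵐ x ∂ν, ∀ t ∈ Metric.ball p c, HasDerivAt
      (fun s => s * klMixIntegrand s (f x) (g x) + (1 - s) * klMixIntegrand (1 - s) (g x) (f x))
      (klMixIntegrand t (f x) (g x) - klMixIntegrand (1 - t) (g x) (f x)
        - (f x - g x) / log 2) t := by
    filter_upwards [hfg] with x ⟨hfx, hgx, hsum⟩ t ht
    obtain ⟨hct, hct'⟩ := hball t ht
    exact hasDerivAt_mixKL
      (convex_combination_pos (by linarith) (by linarith) hfx hgx hsum).ne'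
  have hbound : ∀ᵐ x ∂ν, ∀ t ∈ Metric.ball p c,
      ‖klMixIntegrand t (f x) (g x) - klMixIntegrand (1 - t) (g x) (f x) - (f x - g x) / log 2‖
        ≤ 2 * ((1 + |log c|) / log 2) + 1 / log 2 := by
    filter_upwards [hfg] with x ⟨hfx, hgx, hsum⟩ t ht
    obtain ⟨hct, hct'⟩ := hball t ht
    exact abs_deriv_mixKL_le hc hct hct' hfx hgx hsum
  refine (hasDerivAt_integral_of_dominated_loc_of_deriv_le (Metric.ball_mem_nhds p hc)
    (Eventually.of_forall fun t => ?_) ?_ ?_ hbound (integrable_const _) hderiv).2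
  · exact (((hf.klMixIntegrand hg t).const_mul t).add
      ((hg.klMixIntegrand hf (1 - t)).const_mul (1 - t))).aestronglyMeasurable
  · exact ((integrable_klMixIntegrand hf hg hfg hp0 hp1).const_mul p).add
      ((integrable_klMixIntegrand hg hf hgf (by linarith) (by linarith)).const_mul (1 - p))
  · exact (((hf.klMixIntegrand hg p).sub (hg.klMixIntegrand hf (1 - p))).sub
      ((hf.sub hg).div_const _)).aestronglyMeasurable

end Densities

section KL

variable {α : Type*} [MeasurableSpace α]

lemma klDiv2_withDensity_eq_integral {μ ν : Measure α} [SigmaFinite μ] [SigmaFinite ν]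
    (hμν : μ ≪ ν) {m : α → ℝ≥0∞} (hm : Measurable m) (hm0 : ∀ᵐ x ∂ν, m x ≠ 0)
    (hm_top : ∀ᵐ x ∂ν, m x ≠ ∞)
    (hint : Integrable (fun x => (μ.rnDeriv ν x).toReal
      * logb 2 ((μ.rnDeriv ν x).toReal / (m x).toReal)) ν) :
    klDiv2 μ (ν.withDensity m)
      = ((∫ x, (μ.rnDeriv ν x).toReal * logb 2 ((μ.rnDeriv ν x).toReal / (m x).toReal) ∂ν : ℝ)
        : EReal) := by
  have hlog : (fun x => logb 2 ((μ.rnDeriv (ν.withDensity m) x).toReal))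
      =ᵐ[μ] fun x => logb 2 ((μ.rnDeriv ν x).toReal / (m x).toReal) := by
    refine hμν.ae_le ?_
    filter_upwards [Measure.rnDeriv_withDensity_right μ ν hm.aemeasurable hm0 hm_top] with x hx
    rw [hx, ENNReal.toReal_mul, ENNReal.toReal_inv, inv_mul_eq_div]
  have hint_μ : Integrable (fun x => logb 2 ((μ.rnDeriv (ν.withDensity m) x).toReal)) μ :=
    ((integrable_rnDeriv_smul_iff hμν).mp hint).congr hlog.symm
  rw [klDiv2, if_pos ⟨hμν.trans (withDensity_absolutelyContinuous' hm.aemeasurable hm0), hint_μ⟩,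
    integral_congr_ae hlog, ← integral_rnDeriv_smul hμν]
  rfl

variable (μ μ' : Measure α)

lemma mix_comm_s4 (t : ℝ) : mix t μ μ' = mix (1 - t) μ' μ := by
  rw [mix, mix, sub_sub_cancel, add_comm]

noncomputable def mixDensity (t : ℝ) : α → ℝ≥0∞ :=
  ENNReal.ofReal t • μ.rnDeriv (μ + μ') + ENNReal.ofReal (1 - t) • μ'.rnDeriv (μ + μ')

lemma measurable_mixDensity (t : ℝ) : Measurable (mixDensity μ μ' t) :=
  ((Measure.measurable_rnDeriv _ _).const_smul _).add ((Measure.measurable_rnDeriv _ _).const_smul _)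

variable [IsFiniteMeasure μ] [IsFiniteMeasure μ']

lemma mix_eq_withDensity (t : ℝ) : mix t μ μ' = (μ + μ').withDensity (mixDensity μ μ' t) := by
  rw [mixDensity, withDensity_add_left ((Measure.measurable_rnDeriv _ _).const_smul _),
    withDensity_smul _ (Measure.measurable_rnDeriv _ _),
    withDensity_smul _ (Measure.measurable_rnDeriv _ _),
    Measure.withDensity_rnDeriv_eq _ _ (Measure.AbsolutelyContinuous.rfl.add_right μ'),
    Measure.withDensity_rnDeriv_eq _ _ (Measure.AbsolutelyContinuous.rfl.add_right' μ), mix]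

lemma ae_mixDensity_ne_top (t : ℝ) : ∀ᵐ x ∂(μ + μ'), mixDensity μ μ' t x ≠ ∞ := by
  filter_upwards [μ.rnDeriv_lt_top (μ + μ'), μ'.rnDeriv_lt_top (μ + μ')] with x hμ hμ'
  simp only [mixDensity, Pi.add_apply, Pi.smul_apply, smul_eq_mul]
  finiteness

lemma ae_toReal_mixDensity {t : ℝ} (ht0 : 0 ≤ t) (ht1 : t ≤ 1) :
    ∀ᵐ x ∂(μ + μ'), (mixDensity μ μ' t x).toReal
      = t * (μ.rnDeriv (μ + μ') x).toReal + (1 - t) * (μ'.rnDeriv (μ + μ') x).toReal := by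
  filter_upwards [μ.rnDeriv_lt_top (μ + μ'), μ'.rnDeriv_lt_top (μ + μ')] with x hμ hμ'
  simp only [mixDensity, Pi.add_apply, Pi.smul_apply, smul_eq_mul]
  rw [ENNReal.toReal_add (by finiteness) (by finiteness), ENNReal.toReal_mul, ENNReal.toReal_mul,
    ENNReal.toReal_ofReal ht0, ENNReal.toReal_ofReal (sub_nonneg.mpr ht1)]

lemma ae_toReal_rnDeriv_partition :
    ∀ᵐ x ∂(μ + μ'), 0 ≤ (μ.rnDeriv (μ + μ') x).toReal ∧ 0 ≤ (μ'.rnDeriv (μ + μ') x).toReal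
      ∧ (μ.rnDeriv (μ + μ') x).toReal + (μ'.rnDeriv (μ + μ') x).toReal = 1 := by
  filter_upwards [μ.rnDeriv_add' μ' (μ + μ'), (μ + μ').rnDeriv_self,
    μ.rnDeriv_lt_top (μ + μ'), μ'.rnDeriv_lt_top (μ + μ')] with x hadd hself hμ hμ'
  refine ⟨ENNReal.toReal_nonneg, ENNReal.toReal_nonneg, ?_⟩
  rw [← ENNReal.toReal_add hμ.ne hμ'.ne, ← Pi.add_apply, ← hadd, hself, ENNReal.toReal_one]

lemma integrable_klMixIntegrand_rnDeriv {t : ℝ} (ht0 : 0 < t) (ht1 : t < 1) :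
    Integrable (fun x => klMixIntegrand t (μ.rnDeriv (μ + μ') x).toReal
      (μ'.rnDeriv (μ + μ') x).toReal) (μ + μ') :=
  integrable_klMixIntegrand (Measure.measurable_rnDeriv _ _).ennreal_toReal
    (Measure.measurable_rnDeriv _ _).ennreal_toReal (ae_toReal_rnDeriv_partition μ μ') ht0 ht1

lemma integrable_klMixIntegrand_rnDeriv_right {t : ℝ} (ht0 : 0 < t) (ht1 : t < 1) :
    Integrable (fun x => klMixIntegrand (1 - t) (μ'.rnDeriv (μ + μ') x).toReal
      (μ.rnDeriv (μ + μ') x).toReal) (μ + μ') := by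
  simpa only [add_comm μ' μ] using
    integrable_klMixIntegrand_rnDeriv μ' μ (sub_pos.mpr ht1) (by linarith)

lemma klDiv2_mix_eq_integral {t : ℝ} (ht0 : 0 < t) (ht1 : t < 1) :
    klDiv2 μ (mix t μ μ') = ((∫ x, klMixIntegrand t (μ.rnDeriv (μ + μ') x).toReal
      (μ'.rnDeriv (μ + μ') x).toReal ∂(μ + μ') : ℝ) : EReal) := by
  have hm_toReal := ae_toReal_mixDensity μ μ' ht0.le ht1.le
  have hm0 : ∀ᵐ x ∂(μ + μ'), mixDensity μ μ' t x ≠ 0 := by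
    filter_upwards [hm_toReal, ae_toReal_rnDeriv_partition μ μ'] with x hx ⟨hf, hg, hsum⟩ h0
    rw [h0, ENNReal.toReal_zero] at hx
    exact (convex_combination_pos ht0 ht1 hf hg hsum).ne hx
  have hintegrand : (fun x => (μ.rnDeriv (μ + μ') x).toReal
      * logb 2 ((μ.rnDeriv (μ + μ') x).toReal / (mixDensity μ μ' t x).toReal)) =ᵐ[μ + μ']
      fun x => klMixIntegrand t (μ.rnDeriv (μ + μ') x).toReal (μ'.rnDeriv (μ + μ') x).toReal := by
    filter_upwards [hm_toReal] with x hx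
    rw [hx, klMixIntegrand]
  rw [mix_eq_withDensity, klDiv2_withDensity_eq_integral
    (Measure.AbsolutelyContinuous.rfl.add_right μ') (measurable_mixDensity μ μ' t) hm0
    (ae_mixDensity_ne_top μ μ' t)
    ((integrable_klMixIntegrand_rnDeriv μ μ' ht0 ht1).congr hintegrand.symm),
    integral_congr_ae hintegrand]

lemma klDiv2_mix_right_eq_integral {t : ℝ} (ht0 : 0 < t) (ht1 : t < 1) :
    klDiv2 μ' (mix t μ μ') = ((∫ x, klMixIntegrand (1 - t) (μ'.rnDeriv (μ + μ') x).toReal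
      (μ.rnDeriv (μ + μ') x).toReal ∂(μ + μ') : ℝ) : EReal) := by
  rw [mix_comm_s4, klDiv2_mix_eq_integral μ' μ (sub_pos.mpr ht1) (by linarith), add_comm μ' μ]

lemma mutualInfoFun_eq_integral {t : ℝ} (ht0 : 0 < t) (ht1 : t < 1) :
    mutualInfoFun μ μ' t = ∫ x, t * klMixIntegrand t (μ.rnDeriv (μ + μ') x).toReal
        (μ'.rnDeriv (μ + μ') x).toReal
      + (1 - t) * klMixIntegrand (1 - t) (μ'.rnDeriv (μ + μ') x).toReal
        (μ.rnDeriv (μ + μ') x).toReal ∂(μ + μ') := by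
  rw [mutualInfoFun, klDiv2_mix_eq_integral μ μ' ht0 ht1,
    klDiv2_mix_right_eq_integral μ μ' ht0 ht1, EReal.toReal_coe, EReal.toReal_coe,
    ← integral_const_mul, ← integral_const_mul,
    integral_add ((integrable_klMixIntegrand_rnDeriv μ μ' ht0 ht1).const_mul t)
      ((integrable_klMixIntegrand_rnDeriv_right μ μ' ht0 ht1).const_mul (1 - t))]

end KL

theorem hasDerivAt_mutualInfoFun {α : Type*} [MeasurableSpace α] (μ μ' : Measure α)
    [IsProbabilityMeasure μ] [IsProbabilityMeasure μ'] {p : ℝ} (hp0 : 0 < p) (hp1 : p < 1) :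
    HasDerivAt (mutualInfoFun μ μ')
      ((klDiv2 μ (mix p μ μ')).toReal - (klDiv2 μ' (mix p μ μ')).toReal) p := by
  have hf_int : Integrable (fun x => (μ.rnDeriv (μ + μ') x).toReal) (μ + μ') :=
    Measure.integrable_toReal_rnDeriv
  have hg_int : Integrable (fun x => (μ'.rnDeriv (μ + μ') x).toReal) (μ + μ') :=
    Measure.integrable_toReal_rnDeriv
  have hmass : ∫ x, (μ.rnDeriv (μ + μ') x).toReal - (μ'.rnDeriv (μ + μ') x).toReal ∂(μ + μ')
      = 0 := by
    rw [integral_sub hf_int hg_int,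
      Measure.integral_toReal_rnDeriv (Measure.AbsolutelyContinuous.rfl.add_right μ'),
      Measure.integral_toReal_rnDeriv (Measure.AbsolutelyContinuous.rfl.add_right' μ)]
    simp
  have hI : mutualInfoFun μ μ' =ᶠ[𝓝 p] fun t => ∫ x, t * klMixIntegrand t
      (μ.rnDeriv (μ + μ') x).toReal (μ'.rnDeriv (μ + μ') x).toReal + (1 - t) * klMixIntegrand
      (1 - t) (μ'.rnDeriv (μ + μ') x).toReal (μ.rnDeriv (μ + μ') x).toReal ∂(μ + μ') := by
    filter_upwards [Ioo_mem_nhds hp0 hp1] with t ⟨ht0, ht1⟩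
    exact mutualInfoFun_eq_integral μ μ' ht0 ht1
  have hK := integrable_klMixIntegrand_rnDeriv μ μ' hp0 hp1
  have hK' := integrable_klMixIntegrand_rnDeriv_right μ μ' hp0 hp1
  refine ((hasDerivAt_integral_mixKL (Measure.measurable_rnDeriv _ _).ennreal_toReal
    (Measure.measurable_rnDeriv _ _).ennreal_toReal (ae_toReal_rnDeriv_partition μ μ') hp0 hp1
    ).congr_of_eventuallyEq hI).congr_deriv ?_
  rw [klDiv2_mix_eq_integral μ μ' hp0 hp1, klDiv2_mix_right_eq_integral μ μ' hp0 hp1,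
    EReal.toReal_coe, EReal.toReal_coe,
    integral_sub (hK.sub' hK') ((hf_int.sub' hg_int).div_const _), integral_sub hK hK',
    integral_div, hmass, zero_div, sub_zero]

theorem stmt_4 (μK μN : Measure I01) [IsProbabilityMeasure μK] [IsProbabilityMeasure μN]
    (p : ℝ) (hp : p ∈ Set.Ioo (0 : ℝ) 1) :
    HasDerivAt (mutualInfoFun μK μN)
      ((klDiv2 μK (mix p μK μN)).toReal - (klDiv2 μN (mix p μK μN)).toReal) p :=
  hasDerivAt_mutualInfoFun μK μN hp.1 hp.2
end

section
/- Let εK, εN > 0 satisfy e^{−εK} + e^{−εN} > 1. Consider minimizing KL(μK ‖ μN) over pairs (μK, μN) of Borel probability measures on [0,1] subject to the constraints E_{X∼μK}[−ln X] ≤ εK and E_{X∼μN}[−ln(1−X)] ≤ εN. Then the unique minimizing pair is μK* = δ_{x*} (the Dirac measure at x*) and μN* = (1−q*)·δ_0 + q*·δ_{x*}, where x* = e^{−εK} and q* = εN / (−ln(1−x*)). -/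
open MeasureTheory Filter Topology
open scoped ENNReal

open Classical in
/-- The log-loss error metric on keys: `d^K(x) = −ln x`, with `−ln 0 = +∞`. -/
noncomputable def dLogK (x : I01) : ℝ≥0∞ :=
  if (x : ℝ) = 0 then ⊤ else ENNReal.ofReal (-Real.log (x : ℝ))

open Classical in
/-- The log-loss error metric on non-keys: `d^N(x) = −ln(1−x)`, with `−ln 0 = +∞`. -/
noncomputable def dLogN (x : I01) : ℝ≥0∞ :=
  if (x : ℝ) = 1 then ⊤ else ENNReal.ofReal (-Real.log (1 - (x : ℝ)))

/-- Feasibility for the log-loss constraints. -/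
def FeasLog (εK εN : ℝ) (μK μN : Measure I01) : Prop :=
  IsProbabilityMeasure μK ∧ IsProbabilityMeasure μN ∧
    (∫⁻ x, dLogK x ∂μK) ≤ ENNReal.ofReal εK ∧ (∫⁻ x, dLogN x ∂μN) ≤ ENNReal.ofReal εN

open Real

/-! Write `x = e^{-εK}`, `t = -ln(1 - x)`, `q = εN / t`, and take the exponent
`a = x / ((1 - x) t)`. This is the exponent for which `y ↦ y^a` lies below
`y ↦ (x^a / t) · (-ln(1 - y))` on `[0, 1)`, touching it exactly at `y = 0` and `y = x`: the
log-derivatives agree at `x`, and the sign change of their difference is governed by the strictly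
concave function `z ↦ -z ln z`.

For a feasible pair, the Donsker–Varadhan inequality with test function `a ln y` gives
`KL(μK ‖ μN) ≥ a E_K[ln X] - ln E_N[X^a] ≥ -a εK - ln(x^a q) = -ln q`, because
`E_N[X^a] ≤ (x^a / t) E_N[-ln(1 - X)] ≤ x^a εN / t`. At equality `E_N[X^a] = x^a q`, so `μN` lives
on the contact set `{0, x}` with mass `q` at `x`, and then `μK ≪ μN` together with `μK{0} = 0`
forces `μK = δ_x`. -/

section Tangency

variable {a x y : ℝ}

lemma negMulLog_pos_of_lt_one {x : ℝ} (h0 : 0 < x) (h1 : x < 1) : 0 < negMulLog x := by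
  rw [negMulLog_eq_neg]
  exact neg_pos.2 (mul_log_neg h0 h1)

lemma pos_of_mul_negMulLog_one_sub_eq (hx0 : 0 < x) (hx1 : x < 1)
    (ha : a * negMulLog (1 - x) = x) : 0 < a :=
  pos_of_mul_pos_left (ha ▸ hx0) (negMulLog_pos_of_lt_one (by linarith) (by linarith)).le

lemma lt_mul_negMulLog_one_sub (hx1 : x < 1) (ha : a * negMulLog (1 - x) = x)
    (hy0 : 0 < y) (hyx : y < x) : y < a * negMulLog (1 - y) := by
  have ha0 := pos_of_mul_negMulLog_one_sub_eq (hy0.trans hyx) hx1 ha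
  have hslope := strictConcaveOn_negMulLog.slope_anti_adjacent
    (x := 1 - x) (y := 1 - y) (z := 1) (Set.mem_Ici.2 (by linarith)) (by simp) (by linarith)
    (by linarith)
  rw [negMulLog_one, div_lt_div_iff₀ (by linarith) (by linarith)] at hslope
  nlinarith

lemma mul_negMulLog_one_sub_lt (hx0 : 0 < x) (hx1 : x < 1) (ha : a * negMulLog (1 - x) = x)
    (hxy : x < y) (hy1 : y < 1) : a * negMulLog (1 - y) < y := by
  have ha0 := pos_of_mul_negMulLog_one_sub_eq hx0 hx1 ha
  have hslope := strictConcaveOn_negMulLog.slope_anti_adjacent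
    (x := 1 - y) (y := 1 - x) (z := 1) (Set.mem_Ici.2 (by linarith)) (by simp) (by linarith)
    (by linarith)
  rw [negMulLog_one, div_lt_div_iff₀ (by linarith) (by linarith)] at hslope
  nlinarith

lemma hasDerivAt_mul_log_sub_log_neg_log_one_sub (hy0 : 0 < y) (hy1 : y < 1) :
    HasDerivAt (fun y => a * log y - log (-log (1 - y))) (a / y - 1 / negMulLog (1 - y)) y := by
  have hlog : -log (1 - y) ≠ 0 := (neg_pos.2 (log_neg (by linarith) (by linarith))).ne'
  have h1 : HasDerivAt (fun y => 1 - y) (-1) y := by simpa using (hasDerivAt_id y).const_sub 1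
  have h2 := (h1.log (by linarith)).fun_neg.log hlog
  refine (((hasDerivAt_log hy0.ne').const_mul a).sub h2).congr_deriv ?_
  rw [negMulLog_def]
  field_simp

lemma mul_log_sub_log_neg_log_one_sub_lt (hx0 : 0 < x) (hx1 : x < 1)
    (ha : a * negMulLog (1 - x) = x) (hy0 : 0 < y) (hy1 : y < 1) (hyx : y ≠ x) :
    a * log y - log (-log (1 - y)) < a * log x - log (-log (1 - x)) := by
  set F : ℝ → ℝ := fun y => a * log y - log (-log (1 - y))
  have hF : ∀ z ∈ Set.Ioo (0 : ℝ) 1, HasDerivAt F (a / z - 1 / negMulLog (1 - z)) z :=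
    fun z hz => hasDerivAt_mul_log_sub_log_neg_log_one_sub hz.1 hz.2
  have hFcont : ContinuousOn F (Set.Ioo 0 1) :=
    fun z hz => (hF z hz).continuousAt.continuousWithinAt
  have hsub : ∀ z ∈ Set.Ioo (0 : ℝ) 1, a / z - 1 / negMulLog (1 - z)
      = (a * negMulLog (1 - z) - z) / (z * negMulLog (1 - z)) := by
    intro z hz
    have := negMulLog_pos_of_lt_one (x := 1 - z) (by linarith [hz.2]) (by linarith [hz.1])
    have := hz.1.ne'
    field_simp
  rcases hyx.lt_or_gt with hyx | hxy
  · have hmono : StrictMonoOn F (Set.Ioc 0 x) := by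
      refine strictMonoOn_of_deriv_pos (convex_Ioc 0 x)
        (hFcont.mono fun z hz => ⟨hz.1, hz.2.trans_lt hx1⟩) fun z hz => ?_
      rw [interior_Ioc] at hz
      have hz' : z ∈ Set.Ioo (0 : ℝ) 1 := ⟨hz.1, hz.2.trans hx1⟩
      rw [(hF z hz').deriv, hsub z hz']
      have := negMulLog_pos_of_lt_one (x := 1 - z) (by linarith [hz'.2]) (by linarith [hz'.1])
      exact div_pos (sub_pos.2 (lt_mul_negMulLog_one_sub hx1 ha hz.1 hz.2)) (mul_pos hz'.1 this)
    exact hmono ⟨hy0, hyx.le⟩ ⟨hx0, le_rfl⟩ hyx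
  · have hanti : StrictAntiOn F (Set.Ico x 1) := by
      refine strictAntiOn_of_deriv_neg (convex_Ico x 1)
        (hFcont.mono fun z hz => ⟨hx0.trans_le hz.1, hz.2⟩) fun z hz => ?_
      rw [interior_Ico] at hz
      have hz' : z ∈ Set.Ioo (0 : ℝ) 1 := ⟨hx0.trans hz.1, hz.2⟩
      rw [(hF z hz').deriv, hsub z hz']
      have := negMulLog_pos_of_lt_one (x := 1 - z) (by linarith [hz'.2]) (by linarith [hz'.1])
      exact div_neg_of_neg_of_pos (sub_neg.2 (mul_negMulLog_one_sub_lt hx0 hx1 ha hz.1 hz.2))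
        (mul_pos hz'.1 this)
    exact hanti ⟨le_rfl, hx1⟩ ⟨hxy.le, hy1⟩ hxy

lemma rpow_lt_mul_neg_log_one_sub (hx0 : 0 < x) (hx1 : x < 1)
    (ha : a * negMulLog (1 - x) = x) (hy0 : 0 < y) (hy1 : y < 1) (hyx : y ≠ x) :
    y ^ a < x ^ a / -log (1 - x) * -log (1 - y) := by
  have hty : 0 < -log (1 - y) := neg_pos.2 (log_neg (by linarith) (by linarith))
  have htx : 0 < -log (1 - x) := neg_pos.2 (log_neg (by linarith) (by linarith))
  rw [← div_lt_iff₀ hty, ← log_lt_log_iff (by positivity) (by positivity),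
    log_div (by positivity) hty.ne', log_div (by positivity) htx.ne', log_rpow hy0, log_rpow hx0]
  exact mul_log_sub_log_neg_log_one_sub_lt hx0 hx1 ha hy0 hy1 hyx

lemma rpow_le_mul_neg_log_one_sub (hx0 : 0 < x) (hx1 : x < 1)
    (ha : a * negMulLog (1 - x) = x) (hy0 : 0 ≤ y) (hy1 : y < 1) :
    y ^ a ≤ x ^ a / -log (1 - x) * -log (1 - y) := by
  rcases hy0.eq_or_lt with rfl | hy0
  · rw [zero_rpow (pos_of_mul_negMulLog_one_sub_eq hx0 hx1 ha).ne']
    simp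
  rcases eq_or_ne y x with rfl | hyx
  · have htx : 0 < -log (1 - y) := neg_pos.2 (log_neg (by linarith) (by linarith))
    rw [div_mul_cancel₀ _ htx.ne']
  · exact (rpow_lt_mul_neg_log_one_sub hx0 hx1 ha hy0 hy1 hyx).le

end Tangency

section DonskerVaradhan

variable {α : Type*} [MeasurableSpace α] {μ ν : Measure α} {g : α → ℝ}

lemma integral_pos_of_absolutelyContinuous [NeZero μ] (hμν : μ ≪ ν) (hg0 : 0 ≤ᵐ[ν] g)
    (hgν : Integrable g ν) (hgμ : ∀ᵐ x ∂μ, 0 < g x) : 0 < ∫ x, g x ∂ν := by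
  refine (integral_nonneg_of_ae hg0).lt_of_ne fun h => ?_
  have hzero : ∀ᵐ x ∂μ, g x = 0 :=
    hμν.ae_le ((integral_eq_zero_iff_of_nonneg_ae hg0 hgν).1 h.symm)
  obtain ⟨x, hpos, hx⟩ := (hgμ.and hzero).exists
  exact hpos.ne' hx

lemma integral_log_sub_log_integral_le_integral_llr [IsProbabilityMeasure μ] [SigmaFinite ν]
    (hμν : μ ≪ ν) (hllr : Integrable (llr μ ν) μ) (hg : Measurable g) (hg0 : 0 ≤ g)
    (hgμ : ∀ᵐ x ∂μ, 0 < g x) (hlog : Integrable (fun x => log (g x)) μ)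
    (hgν : Integrable g ν) :
    ∫ x, log (g x) ∂μ - log (∫ x, g x ∂ν) ≤ ∫ x, llr μ ν x ∂μ := by
  set ρ : α → ℝ := fun x => (μ.rnDeriv ν x).toReal
  set Z := ∫ x, g x ∂ν
  have hZ : 0 < Z := integral_pos_of_absolutelyContinuous hμν (ae_of_all _ hg0) hgν hgμ
  have hcancel : ∀ x, ρ x * (g x / ρ x) ≤ g x := fun x => by
    rcases eq_or_ne (ρ x) 0 with h | h
    · simpa [h] using hg0 x
    · rw [mul_div_cancel₀ _ h]
  have hcancel_int : Integrable (fun x => ρ x * (g x / ρ x)) ν := by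
    refine hgν.mono' (by fun_prop) (ae_of_all _ fun x => ?_)
    rw [Real.norm_of_nonneg (mul_nonneg ENNReal.toReal_nonneg
      (div_nonneg (hg0 x) ENNReal.toReal_nonneg))]
    exact hcancel x
  have hratio_int : Integrable (fun x => g x / ρ x) μ :=
    (integrable_toReal_rnDeriv_mul_iff hμν).1 hcancel_int
  have hratio_le : ∫ x, g x / ρ x ∂μ ≤ Z := by
    rw [← integral_toReal_rnDeriv_mul hμν]
    exact integral_mono hcancel_int hgν hcancel
  -- `log w ≤ w - 1` at `w = g / (ρ Z)`
  have hpointwise : ∀ᵐ x ∂μ, log (g x) - log Z - llr μ ν x ≤ g x / ρ x / Z - 1 := by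
    filter_upwards [hgμ, Measure.rnDeriv_pos hμν, hμν.ae_le (Measure.rnDeriv_lt_top μ ν)]
      with x hgx hρ0 hρtop
    have hρ : 0 < ρ x := ENNReal.toReal_pos hρ0.ne' hρtop.ne
    have := log_le_sub_one_of_pos (show 0 < g x / ρ x / Z by positivity)
    rw [log_div (by positivity) hZ.ne', log_div hgx.ne' hρ.ne'] at this
    change log (g x) - log Z - log (ρ x) ≤ _
    linarith
  have hmono := integral_mono_ae (f := fun x => log (g x) - log Z - llr μ ν x)
    (g := fun x => g x / ρ x / Z - 1) ((hlog.sub (integrable_const _)).sub hllr)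
    ((hratio_int.div_const Z).sub (integrable_const 1)) hpointwise
  rw [integral_sub (f := fun x => log (g x) - log Z) (hlog.sub (integrable_const _)) hllr,
    integral_sub hlog (integrable_const _),
    integral_sub (f := fun x => g x / ρ x / Z) (hratio_int.div_const Z) (integrable_const 1),
    integral_div] at hmono
  simp only [integral_const, probReal_univ, smul_eq_mul, one_mul] at hmono
  have : (∫ x, g x / ρ x ∂μ) / Z ≤ 1 := (div_le_one hZ).2 hratio_le
  linarith

end DonskerVaradhan

open Classical in
lemma klDiv2_eq_ite {α : Type*} [MeasurableSpace α] (μ ν : Measure α) :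
    klDiv2 μ ν = if μ ≪ ν ∧ Integrable (llr μ ν) μ
      then (((∫ x, llr μ ν x ∂μ) / log 2 : ℝ) : EReal) else ⊤ := by
  have hlog2 : log 2 ≠ 0 := (log_pos one_lt_two).ne'
  have hfun : (fun x => logb 2 (μ.rnDeriv ν x).toReal) = fun x => llr μ ν x / log 2 := rfl
  rw [klDiv2, hfun, integral_div]
  simp only [div_eq_mul_inv, integrable_mul_const_iff (isUnit_iff_ne_zero.2 (inv_ne_zero hlog2))]

section TwoPoint

variable {α : Type*} [MeasurableSpace α] {ν : Measure α} {x z : α}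

lemma isProbabilityMeasure_smul_dirac_add_smul_dirac {p : ℝ} (hp0 : 0 ≤ p) (hp1 : p ≤ 1) :
    IsProbabilityMeasure
      (ENNReal.ofReal (1 - p) • Measure.dirac z + ENNReal.ofReal p • Measure.dirac x) := by
  constructor
  simp [← ENNReal.ofReal_add (sub_nonneg.2 hp1) hp0]

lemma dirac_absolutelyContinuous (hx : ν {x} ≠ 0) : Measure.dirac x ≪ ν := by
  refine Measure.AbsolutelyContinuous.mk fun s hs hνs => ?_
  rw [Measure.dirac_apply' _ hs, Set.indicator_apply_eq_zero]
  intro hxs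
  exact absurd (measure_mono_null (Set.singleton_subset_iff.2 hxs) hνs) hx

variable [MeasurableSingletonClass α]

lemma rnDeriv_dirac_self [SigmaFinite ν] (hx : ν {x} ≠ 0) :
    (Measure.dirac x).rnDeriv ν x = (ν {x})⁻¹ := by
  have h := Measure.setLIntegral_rnDeriv (dirac_absolutelyContinuous hx) {x}
  rw [lintegral_singleton, Measure.dirac_apply_of_mem (Set.mem_singleton x)] at h
  exact ENNReal.eq_inv_of_mul_eq_one_left h

lemma klDiv2_dirac [IsFiniteMeasure ν] (hx : ν {x} ≠ 0) :
    klDiv2 (Measure.dirac x) ν = ((-log (ν.real {x}) / log 2 : ℝ) : EReal) := by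
  rw [klDiv2_eq_ite, if_pos ⟨dirac_absolutelyContinuous hx, integrable_dirac enorm_lt_top⟩,
    integral_dirac, llr, rnDeriv_dirac_self hx, ENNReal.toReal_inv, log_inv, measureReal_def]

lemma integral_eq_of_ae_eq_or_eq [IsFiniteMeasure ν] (hzx : z ≠ x)
    (hae : ∀ᵐ y ∂ν, y = z ∨ y = x) (f : α → ℝ) :
    ∫ y, f y ∂ν = ν.real {z} * f z + ν.real {x} * f x := by
  conv_lhs => rw [(Measure.ae_eq_or_eq_iff_eq_dirac_add_dirac hzx).1 hae]
  rw [integral_add_measure ((integrable_dirac enorm_lt_top).smul_measure (measure_ne_top _ _))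
    ((integrable_dirac enorm_lt_top).smul_measure (measure_ne_top _ _)),
    integral_smul_measure, integral_smul_measure, integral_dirac, integral_dirac]
  rfl

lemma eq_smul_dirac_add_smul_dirac [IsProbabilityMeasure ν] (hzx : z ≠ x)
    (hae : ∀ᵐ y ∂ν, y = z ∨ y = x) {p : ℝ} (hp : 0 ≤ p) (hx : ν {x} = ENNReal.ofReal p) :
    ν = ENNReal.ofReal (1 - p) • Measure.dirac z + ENNReal.ofReal p • Measure.dirac x := by
  have hν := (Measure.ae_eq_or_eq_iff_eq_dirac_add_dirac hzx).1 hae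
  have huniv : ν {z} + ENNReal.ofReal p = 1 := by
    have := congrArg (fun m : Measure α => m Set.univ) hν
    simpa [hx] using this.symm
  rw [hν, hx, ENNReal.ofReal_sub _ hp, ENNReal.ofReal_one,
    ENNReal.eq_sub_of_add_eq ENNReal.ofReal_ne_top huniv]

lemma klDiv2_dirac_smul_dirac_add_smul_dirac (hzx : z ≠ x) {q : ℝ} (hq0 : 0 < q) (hq1 : q ≤ 1) :
    klDiv2 (Measure.dirac x)
      (ENNReal.ofReal (1 - q) • Measure.dirac z + ENNReal.ofReal q • Measure.dirac x)
      = ((-log q / log 2 : ℝ) : EReal) := by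
  have := isProbabilityMeasure_smul_dirac_add_smul_dirac (x := x) (z := z) hq0.le hq1
  have hx : (ENNReal.ofReal (1 - q) • Measure.dirac z + ENNReal.ofReal q • Measure.dirac x) {x}
      = ENNReal.ofReal q := by
    simp [Measure.dirac_apply', hzx]
  rw [klDiv2_dirac (by simpa [hx] using hq0), measureReal_def, hx, ENNReal.toReal_ofReal hq0.le]

end TwoPoint

section LogLoss

lemma integrable_of_lintegral_ofReal_le {α : Type*} [MeasurableSpace α] {μ : Measure α}
    {f : α → ℝ} (hf : AEStronglyMeasurable f μ) (hf0 : 0 ≤ᵐ[μ] f) {c : ℝ}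
    (h : ∫⁻ x, ENNReal.ofReal (f x) ∂μ ≤ ENNReal.ofReal c) : Integrable f μ :=
  ⟨hf, (hasFiniteIntegral_iff_ofReal hf0).2 (h.trans_lt ENNReal.ofReal_lt_top)⟩

lemma integral_le_of_lintegral_ofReal_le {α : Type*} [MeasurableSpace α] {μ : Measure α}
    {f : α → ℝ} (hf : AEStronglyMeasurable f μ) (hf0 : 0 ≤ᵐ[μ] f) {c : ℝ} (hc : 0 ≤ c)
    (h : ∫⁻ x, ENNReal.ofReal (f x) ∂μ ≤ ENNReal.ofReal c) : ∫ x, f x ∂μ ≤ c := by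
  rw [integral_eq_lintegral_of_nonneg_ae hf0 hf]
  exact ENNReal.toReal_le_of_le_ofReal hc h

lemma measurable_dLogK : Measurable dLogK :=
  Measurable.ite (measurable_subtype_coe (measurableSet_singleton 0)) measurable_const
    (by fun_prop)

lemma measurable_dLogN : Measurable dLogN :=
  Measurable.ite (measurable_subtype_coe (measurableSet_singleton 1)) measurable_const
    (by fun_prop)

lemma ofReal_neg_log_le_dLogK (y : I01) : ENNReal.ofReal (-log y) ≤ dLogK y := by
  unfold dLogK
  split_ifs <;> simp

lemma ofReal_neg_log_one_sub_le_dLogN (y : I01) : ENNReal.ofReal (-log (1 - y)) ≤ dLogN y := by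
  unfold dLogN
  split_ifs <;> simp

variable {μ : Measure I01} {ε : ℝ}

lemma ae_coe_ne_zero_of_lintegral_dLogK_le (h : ∫⁻ y, dLogK y ∂μ ≤ ENNReal.ofReal ε) :
    ∀ᵐ (y : I01) ∂μ, (y : ℝ) ≠ 0 := by
  filter_upwards [ae_lt_top measurable_dLogK (h.trans_lt ENNReal.ofReal_lt_top).ne] with y hy
  intro hy0
  simp [dLogK, hy0] at hy

lemma ae_coe_ne_one_of_lintegral_dLogN_le (h : ∫⁻ y, dLogN y ∂μ ≤ ENNReal.ofReal ε) :
    ∀ᵐ (y : I01) ∂μ, (y : ℝ) ≠ 1 := by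
  filter_upwards [ae_lt_top measurable_dLogN (h.trans_lt ENNReal.ofReal_lt_top).ne] with y hy
  intro hy1
  simp [dLogN, hy1] at hy

lemma integrable_neg_log_of_lintegral_dLogK_le (h : ∫⁻ y, dLogK y ∂μ ≤ ENNReal.ofReal ε) :
    Integrable (fun y : I01 => -log (y : ℝ)) μ :=
  integrable_of_lintegral_ofReal_le measurable_subtype_coe.log.neg.aestronglyMeasurable
    (ae_of_all _ fun y => neg_nonneg.2 (log_nonpos y.2.1 y.2.2))
    ((lintegral_mono ofReal_neg_log_le_dLogK).trans h)

lemma integral_neg_log_le_of_lintegral_dLogK_le (hε : 0 ≤ ε)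
    (h : ∫⁻ y, dLogK y ∂μ ≤ ENNReal.ofReal ε) : ∫ y, -log (y : ℝ) ∂μ ≤ ε :=
  integral_le_of_lintegral_ofReal_le measurable_subtype_coe.log.neg.aestronglyMeasurable
    (ae_of_all _ fun y => neg_nonneg.2 (log_nonpos y.2.1 y.2.2)) hε
    ((lintegral_mono ofReal_neg_log_le_dLogK).trans h)

lemma integrable_neg_log_one_sub_of_lintegral_dLogN_le
    (h : ∫⁻ y, dLogN y ∂μ ≤ ENNReal.ofReal ε) :
    Integrable (fun y : I01 => -log (1 - (y : ℝ))) μ :=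
  integrable_of_lintegral_ofReal_le
    (measurable_const.sub measurable_subtype_coe).log.neg.aestronglyMeasurable
    (ae_of_all _ fun y => neg_nonneg.2 (log_nonpos (by linarith [y.2.2]) (by linarith [y.2.1])))
    ((lintegral_mono ofReal_neg_log_one_sub_le_dLogN).trans h)

lemma integral_neg_log_one_sub_le_of_lintegral_dLogN_le (hε : 0 ≤ ε)
    (h : ∫⁻ y, dLogN y ∂μ ≤ ENNReal.ofReal ε) : ∫ y, -log (1 - (y : ℝ)) ∂μ ≤ ε :=
  integral_le_of_lintegral_ofReal_le (f := fun y : I01 => -log (1 - (y : ℝ)))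
    (measurable_const.sub measurable_subtype_coe).log.neg.aestronglyMeasurable
    (ae_of_all _ fun y => neg_nonneg.2 (log_nonpos (by linarith [y.2.2]) (by linarith [y.2.1])))
    hε
    ((lintegral_mono ofReal_neg_log_one_sub_le_dLogN).trans h)

end LogLoss

section Minimizer

variable {εK εN a x : ℝ} {μK μN ν : Measure I01}

lemma integrable_coe_rpow [IsFiniteMeasure ν] (ha : 0 ≤ a) :
    Integrable (fun y : I01 => (y : ℝ) ^ a) ν :=
  Integrable.of_bound (by fun_prop) 1 (ae_of_all _ fun y => by
    rw [Real.norm_of_nonneg (rpow_nonneg y.2.1 a)]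
    exact rpow_le_one y.2.1 y.2.2 ha)

lemma ae_rpow_le_mul_neg_log_one_sub (hx0 : 0 < x) (hx1 : x < 1)
    (ha : a * negMulLog (1 - x) = x) (hν : ∫⁻ y, dLogN y ∂ν ≤ ENNReal.ofReal εN) :
    ∀ᵐ (y : I01) ∂ν, (y : ℝ) ^ a ≤ x ^ a / -log (1 - x) * -log (1 - y) := by
  filter_upwards [ae_coe_ne_one_of_lintegral_dLogN_le hν] with y hy
  exact rpow_le_mul_neg_log_one_sub hx0 hx1 ha y.2.1 (y.2.2.lt_of_ne hy)

lemma integral_rpow_le_integral_mul_neg_log_one_sub [IsFiniteMeasure ν] (hx0 : 0 < x)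
    (hx1 : x < 1) (ha : a * negMulLog (1 - x) = x) (hν : ∫⁻ y, dLogN y ∂ν ≤ ENNReal.ofReal εN) :
    ∫ y, (y : ℝ) ^ a ∂ν ≤ ∫ y, x ^ a / -log (1 - x) * -log (1 - (y : ℝ)) ∂ν :=
  integral_mono_ae (integrable_coe_rpow (pos_of_mul_negMulLog_one_sub_eq hx0 hx1 ha).le)
    ((integrable_neg_log_one_sub_of_lintegral_dLogN_le hν).const_mul _)
    (ae_rpow_le_mul_neg_log_one_sub hx0 hx1 ha hν)

lemma integral_mul_neg_log_one_sub_le (hx0 : 0 < x) (hx1 : x < 1) (hεN : 0 ≤ εN)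
    (hν : ∫⁻ y, dLogN y ∂ν ≤ ENNReal.ofReal εN) :
    ∫ y, x ^ a / -log (1 - x) * -log (1 - (y : ℝ)) ∂ν ≤ x ^ a / -log (1 - x) * εN := by
  rw [integral_const_mul]
  exact mul_le_mul_of_nonneg_left (integral_neg_log_one_sub_le_of_lintegral_dLogN_le hεN hν)
    (div_nonneg (rpow_nonneg hx0.le a) (neg_nonneg.2 (log_nonpos (by linarith) (by linarith))))

lemma integral_rpow_le [IsFiniteMeasure ν] (hx0 : 0 < x) (hx1 : x < 1)
    (ha : a * negMulLog (1 - x) = x) (hεN : 0 ≤ εN) (hν : ∫⁻ y, dLogN y ∂ν ≤ ENNReal.ofReal εN) :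
    ∫ y, (y : ℝ) ^ a ∂ν ≤ x ^ a / -log (1 - x) * εN :=
  (integral_rpow_le_integral_mul_neg_log_one_sub hx0 hx1 ha hν).trans
    (integral_mul_neg_log_one_sub_le hx0 hx1 hεN hν)

lemma ae_eq_zero_or_eq_of_integral_rpow_eq [IsFiniteMeasure ν] (hx0 : 0 < x) (hx1 : x < 1)
    (ha : a * negMulLog (1 - x) = x) (hεN : 0 ≤ εN) (hν : ∫⁻ y, dLogN y ∂ν ≤ ENNReal.ofReal εN)
    (heq : ∫ y, (y : ℝ) ^ a ∂ν = x ^ a / -log (1 - x) * εN) :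
    ∀ᵐ (y : I01) ∂ν, (y : ℝ) = 0 ∨ (y : ℝ) = x := by
  have hint_eq : ∫ y, (y : ℝ) ^ a ∂ν = ∫ y, x ^ a / -log (1 - x) * -log (1 - (y : ℝ)) ∂ν :=
    (integral_rpow_le_integral_mul_neg_log_one_sub hx0 hx1 ha hν).antisymm
      ((integral_mul_neg_log_one_sub_le hx0 hx1 hεN hν).trans heq.ge)
  have hae := (integral_eq_iff_of_ae_le
    (integrable_coe_rpow (pos_of_mul_negMulLog_one_sub_eq hx0 hx1 ha).le)
    ((integrable_neg_log_one_sub_of_lintegral_dLogN_le hν).const_mul _)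
    (ae_rpow_le_mul_neg_log_one_sub hx0 hx1 ha hν)).1 hint_eq
  filter_upwards [hae, ae_coe_ne_one_of_lintegral_dLogN_le hν] with y hy hy1
  by_contra! hne
  exact (rpow_lt_mul_neg_log_one_sub hx0 hx1 ha (y.2.1.lt_of_ne' hne.1) (y.2.2.lt_of_ne hy1)
    hne.2).ne hy

lemma neg_mul_sub_log_integral_rpow_le_integral_llr [IsProbabilityMeasure μK]
    [IsProbabilityMeasure μN] (ha : 0 ≤ a) (hεK : 0 ≤ εK)
    (hK : ∫⁻ y, dLogK y ∂μK ≤ ENNReal.ofReal εK) (hac : μK ≪ μN)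
    (hllr : Integrable (llr μK μN) μK) :
    -(a * εK) - log (∫ y, (y : ℝ) ^ a ∂μN) ≤ ∫ y, llr μK μN y ∂μK := by
  have hpos : ∀ᵐ (y : I01) ∂μK, 0 < (y : ℝ) := by
    filter_upwards [ae_coe_ne_zero_of_lintegral_dLogK_le hK] with y hy
    exact y.2.1.lt_of_ne' hy
  have hlog : (fun y : I01 => a * -(-log (y : ℝ))) =ᵐ[μK] fun y => log ((y : ℝ) ^ a) := by
    filter_upwards [hpos] with y hy
    rw [log_rpow hy, neg_neg]
  have hlog_int : Integrable (fun y : I01 => log ((y : ℝ) ^ a)) μK :=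
    ((integrable_neg_log_of_lintegral_dLogK_le hK).neg.const_mul a).congr hlog
  have hDV := integral_log_sub_log_integral_le_integral_llr hac hllr (by fun_prop)
    (fun y => rpow_nonneg y.2.1 a) (hpos.mono fun y hy => rpow_pos_of_pos hy a) hlog_int
    (integrable_coe_rpow ha)
  rw [← integral_congr_ae hlog, integral_const_mul, integral_neg] at hDV
  have := mul_le_mul_of_nonneg_left (integral_neg_log_le_of_lintegral_dLogK_le hεK hK) ha
  linarith

end Minimizer

section Problem

variable {εK εN q : ℝ} {μK μN : Measure I01}

noncomputable def tangentExponent (x : ℝ) : ℝ := x / negMulLog (1 - x)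

lemma tangentExponent_mul_negMulLog {x : ℝ} (hx0 : 0 < x) (hx1 : x < 1) :
    tangentExponent x * negMulLog (1 - x) = x :=
  div_mul_cancel₀ x (negMulLog_pos_of_lt_one (by linarith) (by linarith)).ne'

lemma exp_neg_lt_one (hεK : 0 < εK) : exp (-εK) < 1 := exp_lt_one_iff.2 (neg_lt_zero.2 hεK)

lemma lt_neg_log_one_sub_exp_neg (hεK : 0 < εK) (hnt : 1 < exp (-εK) + exp (-εN)) :
    εN < -log (1 - exp (-εK)) := by
  have h := log_lt_log (sub_pos.2 (exp_neg_lt_one hεK))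
    (show 1 - exp (-εK) < exp (-εN) by linarith)
  rw [log_exp] at h
  linarith

lemma div_neg_log_one_sub_exp_neg_mem_Ioo (hεK : 0 < εK) (hεN : 0 < εN)
    (hnt : 1 < exp (-εK) + exp (-εN)) : εN / -log (1 - exp (-εK)) ∈ Set.Ioo 0 1 :=
  have h := lt_neg_log_one_sub_exp_neg hεK hnt
  ⟨div_pos hεN (hεN.trans h), (div_lt_one (hεN.trans h)).2 h⟩

theorem FeasLog.neg_log_le_integral_llr (hεK : 0 < εK) (hεN : 0 < εN)
    (hnt : 1 < exp (-εK) + exp (-εN)) (h : FeasLog εK εN μK μN) (hac : μK ≪ μN)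
    (hllr : Integrable (llr μK μN) μK) (hq : q = εN / -log (1 - exp (-εK))) :
    -log q ≤ ∫ y, llr μK μN y ∂μK ∧
      (∫ y, llr μK μN y ∂μK = -log q → ∫ y, (y : ℝ) ^ tangentExponent (exp (-εK)) ∂μN
        = exp (-εK) ^ tangentExponent (exp (-εK)) * q) := by
  obtain ⟨hPK, hPN, hK, hN⟩ := h
  have hx0 := exp_pos (-εK)
  have hx1 := exp_neg_lt_one hεK
  have hq0 : 0 < q := hq ▸ (div_neg_log_one_sub_exp_neg_mem_Ioo hεK hεN hnt).1
  set x := exp (-εK) with hx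
  set a := tangentExponent x
  have ha := tangentExponent_mul_negMulLog hx0 hx1
  have ha0 : 0 < a := pos_of_mul_negMulLog_one_sub_eq hx0 hx1 ha
  set Z := ∫ y, (y : ℝ) ^ a ∂μN
  have hZ_le : Z ≤ x ^ a * q := by
    rw [hq, ← mul_div_assoc, mul_div_right_comm]
    exact integral_rpow_le hx0 hx1 ha hεN.le hN
  have hZ_pos : 0 < Z := integral_pos_of_absolutelyContinuous hac
    (ae_of_all _ fun y => rpow_nonneg y.2.1 a) (integrable_coe_rpow ha0.le)
    ((ae_coe_ne_zero_of_lintegral_dLogK_le hK).mono fun y hy =>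
      rpow_pos_of_pos (y.2.1.lt_of_ne' hy) a)
  have hDV := neg_mul_sub_log_integral_rpow_le_integral_llr ha0.le hεK.le hK hac hllr
  have hid : -log q = -(a * εK) - log (x ^ a * q) := by
    rw [log_mul (rpow_pos_of_pos hx0 a).ne' hq0.ne', log_rpow hx0, hx, log_exp]
    ring
  refine ⟨by linarith [log_le_log hZ_pos hZ_le], fun heq => hZ_le.antisymm ?_⟩
  rw [← log_le_log_iff (mul_pos (rpow_pos_of_pos hx0 a) hq0) hZ_pos]
  linarith

theorem FeasLog.eq_of_integral_llr_eq (hεK : 0 < εK) (hεN : 0 < εN)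
    (hnt : 1 < exp (-εK) + exp (-εN)) (h : FeasLog εK εN μK μN) (hac : μK ≪ μN)
    (hllr : Integrable (llr μK μN) μK) (hq : q = εN / -log (1 - exp (-εK)))
    {xs z : I01} (hxs : (xs : ℝ) = exp (-εK)) (hz : (z : ℝ) = 0)
    (heq : ∫ y, llr μK μN y ∂μK = -log q) :
    μK = Measure.dirac xs ∧
      μN = ENNReal.ofReal (1 - q) • Measure.dirac z + ENNReal.ofReal q • Measure.dirac xs := by
  have hZ := (h.neg_log_le_integral_llr hεK hεN hnt hac hllr hq).2 heq
  obtain ⟨hPK, hPN, hK, hN⟩ := h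
  have hq0 : 0 < q := hq ▸ (div_neg_log_one_sub_exp_neg_mem_Ioo hεK hεN hnt).1
  have hx0 := exp_pos (-εK)
  have hx1 := exp_neg_lt_one hεK
  have ha := tangentExponent_mul_negMulLog hx0 hx1
  have hzx : z ≠ xs := by
    rintro rfl
    exact hx0.ne' (hxs.symm.trans hz)
  have haeN : ∀ᵐ y ∂μN, y = z ∨ y = xs := by
    refine (ae_eq_zero_or_eq_of_integral_rpow_eq hx0 hx1 ha hεN.le hN ?_).mono fun y hy => ?_
    · rw [hZ, hq]
      ring
    · exact hy.imp (fun hy => Subtype.ext (hy.trans hz.symm))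
        fun hy => Subtype.ext (hy.trans hxs.symm)
  have hNx : μN.real {xs} = q := by
    rw [integral_eq_of_ae_eq_or_eq hzx haeN, hz, hxs,
      zero_rpow (pos_of_mul_negMulLog_one_sub_eq hx0 hx1 ha).ne', mul_zero, zero_add,
      mul_comm] at hZ
    exact mul_left_cancel₀ (rpow_pos_of_pos hx0 _).ne' hZ
  have haeK : ∀ᵐ y ∂μK, y = xs ∨ y = z := (haeN.filter_mono hac.ae_le).mono fun _ hy => hy.symm
  have hKz : μK {z} = ENNReal.ofReal 0 := by
    rw [ENNReal.ofReal_zero, measure_eq_zero_iff_ae_notMem]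
    filter_upwards [ae_coe_ne_zero_of_lintegral_dLogK_le hK] with y hy
    rintro rfl
    exact hy hz
  constructor
  · simpa using eq_smul_dirac_add_smul_dirac hzx.symm haeK le_rfl hKz
  · exact eq_smul_dirac_add_smul_dirac hzx haeN hq0.le (by rw [← hNx, ofReal_measureReal])

lemma feasLog_dirac_smul_dirac_add_smul_dirac (hεK : 0 < εK) (hεN : 0 < εN)
    (hnt : 1 < exp (-εK) + exp (-εN)) (hq : q = εN / -log (1 - exp (-εK)))
    {xs z : I01} (hxs : (xs : ℝ) = exp (-εK)) (hz : (z : ℝ) = 0) :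
    FeasLog εK εN (Measure.dirac xs)
      (ENNReal.ofReal (1 - q) • Measure.dirac z + ENNReal.ofReal q • Measure.dirac xs) := by
  obtain ⟨hq0, hq1⟩ := hq ▸ div_neg_log_one_sub_exp_neg_mem_Ioo hεK hεN hnt
  refine ⟨inferInstance, isProbabilityMeasure_smul_dirac_add_smul_dirac hq0.le hq1.le, ?_, ?_⟩
  · rw [lintegral_dirac]
    simp [dLogK, hxs, (exp_pos _).ne']
  · rw [lintegral_add_measure, lintegral_smul_measure, lintegral_smul_measure, lintegral_dirac,
      lintegral_dirac]
    simp only [dLogN, hz, hxs, if_neg zero_ne_one, if_neg (exp_neg_lt_one hεK).ne]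
    have ht := hεN.trans (lt_neg_log_one_sub_exp_neg hεK hnt)
    rw [sub_zero, log_one, neg_zero, ENNReal.ofReal_zero, smul_zero, zero_add, smul_eq_mul,
      ← ENNReal.ofReal_mul hq0.le, hq, div_mul_cancel₀ _ ht.ne']

end Problem

theorem stmt_11 (εK εN : ℝ) (hεK : 0 < εK) (hεN : 0 < εN)
    (hnt : 1 < Real.exp (-εK) + Real.exp (-εN))
    -- x* = e^{−εK} as an element of [0,1], and q* = εN / (−ln(1−x*))
    (xstar : I01) (hxstar : (xstar : ℝ) = Real.exp (-εK))
    (qstar : ℝ) (hqstar : qstar = εN / (-Real.log (1 - Real.exp (-εK))))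
    (zero01 : I01) (hzero : (zero01 : ℝ) = 0)
    (μKs μNs : Measure I01)
    (hμKs : μKs = Measure.dirac xstar)
    (hμNs : μNs = (ENNReal.ofReal (1 - qstar)) • Measure.dirac zero01
        + (ENNReal.ofReal qstar) • Measure.dirac xstar) :
    -- (μK*, μN*) is feasible,
    FeasLog εK εN μKs μNs ∧
    -- it minimizes KL(μK ‖ μN) over all feasible pairs,
    (∀ μK μN : Measure I01, FeasLog εK εN μK μN → klDiv2 μKs μNs ≤ klDiv2 μK μN) ∧
    -- and it is the unique minimizer
    (∀ μK μN : Measure I01, FeasLog εK εN μK μN →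
      klDiv2 μK μN = klDiv2 μKs μNs → μK = μKs ∧ μN = μNs) := by
  obtain ⟨hq0, hq1⟩ := hqstar ▸ div_neg_log_one_sub_exp_neg_mem_Ioo hεK hεN hnt
  have hzx : zero01 ≠ xstar := by
    rintro rfl
    exact (exp_pos _).ne' (hxstar.symm.trans hzero)
  have hlog2 : 0 < log 2 := log_pos one_lt_two
  subst hμKs hμNs
  have hval := klDiv2_dirac_smul_dirac_add_smul_dirac hzx hq0 hq1.le
  refine ⟨feasLog_dirac_smul_dirac_add_smul_dirac hεK hεN hnt hqstar hxstar hzero,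
    fun μK μN h => ?_, fun μK μN h heq => ?_⟩
  · rw [hval, klDiv2_eq_ite]
    split_ifs with hc
    · exact EReal.coe_le_coe_iff.2 (div_le_div_of_nonneg_right
        (h.neg_log_le_integral_llr hεK hεN hnt hc.1 hc.2 hqstar).1 hlog2.le)
    · exact le_top
  · rw [hval, klDiv2_eq_ite] at heq
    split_ifs at heq with hc
    · exact h.eq_of_integral_llr_eq hεK hεN hnt hc.1 hc.2 hqstar hxstar hzero
        ((div_left_inj' hlog2.ne').1 (EReal.coe_injective heq))
    · exact absurd heq (EReal.top_ne_coe _)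
end
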